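/- arXiv:2109.12371 — 5 statements merged into one kernel-verified Lean document; each statement's English description precedes it below -/
import Mathlib

section
/- Let μ be a Borel measure on a metric space X, and suppose M, R > 0 and Y ⊆ X satisfy 0 < μ(B(x,2r)) ≤ M·μ(B(x,r)) < ∞ for all 0 < r < R and all x ∈ Y. Then for any x ∈ Y and r < R/2, the set B(x,r) ∩ Y is contained in at most M⁴ closed balls of radius r/2 centred at points of B(x,r) ∩ Y. -/
open MeasureTheory Metric

theorem stmt_1 {X : Type*} [MetricSpace X] [MeasurableSpace X] [BorelSpace X]
    (μ : Measure X) (M R : ℝ) (hM : 0 < M) (hR : 0 < R) (Y : Set X)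
    (hdoub : ∀ x ∈ Y, ∀ r : ℝ, 0 < r → r < R →
      0 < μ (closedBall x (2*r)) ∧
      μ (closedBall x (2*r)) ≤ ENNReal.ofReal M * μ (closedBall x r) ∧
      μ (closedBall x r) < ⊤)
    (x : X) (hx : x ∈ Y) (r : ℝ) (hrR : r < R/2) :
    ∃ T : Finset X, ↑T ⊆ closedBall x r ∩ Y ∧ (T.card : ℝ) ≤ M^4 ∧
      closedBall x r ∩ Y ⊆ ⋃ y ∈ T, closedBall y (r/2) := by
  classical
  -- First, M ≥ 1
  have hM1 : 1 ≤ M := by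
    have h4 := hdoub x hx (R/4) (by linarith) (by linarith)
    have h2 := hdoub x hx (R/2) (by linarith) (by linarith)
    rw [show (2:ℝ)*(R/4) = R/2 by ring] at h4
    have hmono : μ (closedBall x (R/2)) ≤ μ (closedBall x (R/2*2)) :=
      measure_mono (closedBall_subset_closedBall (by linarith))
    rw [show (R/2*2:ℝ) = 2*(R/2) by ring] at hmono
    have hle : μ (closedBall x (R/2)) ≤ ENNReal.ofReal M * μ (closedBall x (R/2)) :=
      hmono.trans h2.2.1
    by_contra hlt
    push_neg at hlt
    have hlt' : ENNReal.ofReal M * μ (closedBall x (R/2)) <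
        1 * μ (closedBall x (R/2)) := by
      rw [ENNReal.mul_lt_mul_iff_left h4.1.ne' h2.2.2.ne]
      exact ENNReal.ofReal_lt_one.2 hlt
    rw [one_mul] at hlt'
    exact absurd (hle.trans_lt hlt') (lt_irrefl _)
  rcases lt_trichotomy r 0 with hr | hr | hr
  · -- r < 0 : ball is empty
    refine ⟨∅, ?_, ?_, ?_⟩
    · simp
    · simp; positivity
    · rw [closedBall_eq_empty.2 hr]; simp
  · -- r = 0 : ball is {x}
    subst hr
    refine ⟨{x}, ?_, ?_, ?_⟩
    · intro y hy
      simp only [Finset.coe_singleton, Set.mem_singleton_iff] at hy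
      subst hy
      exact ⟨mem_closedBall_self le_rfl, hx⟩
    · simpa using one_le_pow₀ hM1
    · intro y hy
      have : dist y x ≤ 0 := hy.1
      simp only [Set.mem_iUnion, Finset.mem_singleton]
      exact ⟨x, rfl, by simpa using this⟩
  · -- r > 0 : the main case
    have h2rR : 2*r < R := by linarith
    set μB := μ (closedBall x (2*r)) with hμB
    have hBpos : 0 < μB := (hdoub x hx r hr (by linarith)).1
    have hBfin : μB < ⊤ := by
      have := (hdoub x hx (2*r) (by linarith) h2rR).2.2
      exact this
    set M' := ENNReal.ofReal M with hM'
    -- key counting bound for separated sets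
    have key : ∀ T : Finset X, ↑T ⊆ closedBall x r ∩ Y →
        (∀ a ∈ T, ∀ b ∈ T, a ≠ b → r/2 < dist a b) → (T.card : ℝ) ≤ M^4 := by
      intro T hTsub hsep
      have hball : ∀ t ∈ T, μB ≤ M'^4 * μ (closedBall t (r/4)) := by
        intro t ht
        have htm := hTsub ht
        have htY : t ∈ Y := htm.2
        have htx : dist t x ≤ r := htm.1
        have d1 := (hdoub t htY (2*r) (by linarith) (by linarith)).2.1
        have d2 := (hdoub t htY r hr (by linarith)).2.1
        have d3 := (hdoub t htY (r/2) (by linarith) (by linarith)).2.1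
        have d4 := (hdoub t htY (r/4) (by linarith) (by linarith)).2.1
        rw [show (2:ℝ)*(2*r) = 4*r by ring] at d1
        rw [show (2:ℝ)*(r/2) = r by ring] at d3
        rw [show (2:ℝ)*(r/4) = r/2 by ring] at d4
        have hsub : closedBall x (2*r) ⊆ closedBall t (4*r) :=
          closedBall_subset_closedBall' (by
            rw [dist_comm]; linarith)
        calc μB ≤ μ (closedBall t (4*r)) := measure_mono hsub
          _ ≤ M' * μ (closedBall t (2*r)) := d1
          _ ≤ M' * (M' * μ (closedBall t r)) := mul_le_mul_right d2 _
          _ ≤ M' * (M' * (M' * μ (closedBall t (r/2)))) :=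
              mul_le_mul_right (mul_le_mul_right d3 _) _
          _ ≤ M' * (M' * (M' * (M' * μ (closedBall t (r/4))))) :=
              mul_le_mul_right (mul_le_mul_right (mul_le_mul_right d4 _) _) _
          _ = M'^4 * μ (closedBall t (r/4)) := by ring
      have hdisj : (↑T : Set X).PairwiseDisjoint (fun t => closedBall t (r/4)) := by
        intro a ha b hb hab
        exact closedBall_disjoint_closedBall (by
          have := hsep a ha b hb hab
          linarith)
      have hsum : ∑ t ∈ T, μ (closedBall t (r/4)) ≤ μB := by
        rw [← measure_biUnion_finset hdisj (fun t _ => measurableSet_closedBall)]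
        refine measure_mono (Set.iUnion₂_subset fun t ht => ?_)
        have htx : dist t x ≤ r := (hTsub ht).1
        exact closedBall_subset_closedBall' (by linarith)
      have hcard : (T.card : ENNReal) * μB ≤ M'^4 * μB := by
        calc (T.card : ENNReal) * μB = ∑ _t ∈ T, μB := by
              rw [Finset.sum_const, nsmul_eq_mul]
          _ ≤ ∑ t ∈ T, M'^4 * μ (closedBall t (r/4)) :=
              Finset.sum_le_sum hball
          _ = M'^4 * ∑ t ∈ T, μ (closedBall t (r/4)) := (Finset.mul_sum _ _ _).symm
          _ ≤ M'^4 * μB := mul_le_mul_right hsum _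
      have hc : (T.card : ENNReal) ≤ M'^4 :=
        (ENNReal.mul_le_mul_iff_left hBpos.ne' hBfin.ne).1 hcard
      rw [hM', ← ENNReal.ofReal_pow hM.le] at hc
      have := ENNReal.toReal_mono ENNReal.ofReal_ne_top hc
      rw [ENNReal.toReal_ofReal (by positivity)] at this
      simpa using this
    -- the set of cardinalities of separated subsets
    set P : Finset X → Prop := fun T =>
      ↑T ⊆ closedBall x r ∩ Y ∧ ∀ a ∈ T, ∀ b ∈ T, a ≠ b → r/2 < dist a b with hP
    set A : Set ℕ := {n | ∃ T : Finset X, P T ∧ T.card = n} with hA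
    have hA0 : 0 ∈ A := ⟨∅, ⟨by simp, by simp⟩, rfl⟩
    have hAbdd : BddAbove A := by
      refine ⟨Nat.floor (M^4), fun n hn => ?_⟩
      obtain ⟨T, hT, rfl⟩ := hn
      exact Nat.le_floor (key T hT.1 hT.2)
    obtain ⟨T, hT, hTcard⟩ := Nat.sSup_mem ⟨0, hA0⟩ hAbdd
    refine ⟨T, hT.1, key T hT.1 hT.2, ?_⟩
    intro y hy
    by_contra hnc
    simp only [Set.mem_iUnion, mem_closedBall, not_exists, not_and, not_le] at hnc
    have hyT : y ∉ T := fun h => by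
      have := hnc y h
      simp at this
      linarith
    have hP' : P (insert y T) := by
      constructor
      · intro z hz
        simp only [Finset.coe_insert, Set.mem_insert_iff] at hz
        rcases hz with rfl | hz
        · exact hy
        · exact hT.1 hz
      · intro a ha b hb hab
        simp only [Finset.mem_insert] at ha hb
        rcases ha with rfl | ha
        · rcases hb with rfl | hb
          · exact absurd rfl hab
          · exact hnc b hb
        · rcases hb with rfl | hb
          · rw [dist_comm]; exact hnc a ha
          · exact hT.2 a ha b hb hab
    have hmem : T.card + 1 ∈ A := ⟨insert y T, hP', Finset.card_insert_of_notMem hyT⟩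
    have := le_csSup hAbdd hmem
    rw [hTcard] at this
    omega
end

section
/- Let X be a metric space, x ∈ X, and for locally finite Borel measures μ, ν on X define F_x(μ,ν) as the infimum over 0 < ε < 1/2 such that sup{ ∫ g d(μ−ν) : g : X → [−1,1], (1/ε)-Lipschitz, supp g ⊆ B(x,1/ε) } < ε (with F_x = 1/2 if no such ε exists). Then F_x is a metric on the space of locally finite Borel regular measures on X. -/
open MeasureTheory Metric
open scoped ENNReal NNReal

/-- `F^{L,r}_x(μ,ν)`: the supremum of `∫ g d(μ−ν)` over `L`-Lipschitz functions
`g : X → [-1,1]` with support in the closed ball `B(x,r)`. -/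
noncomputable def FLr {X : Type*} [MetricSpace X] [MeasurableSpace X]
    (x : X) (L r : ℝ) (μ ν : Measure X) : ℝ :=
  sSup {t : ℝ | ∃ g : X → ℝ, (∀ y, g y ∈ Set.Icc (-1:ℝ) 1) ∧
    LipschitzWith (Real.toNNReal L) g ∧ tsupport g ⊆ closedBall x r ∧
    t = (∫ y, g y ∂μ) - ∫ y, g y ∂ν}

/-- `F_x(μ,ν)`: the infimum over `0 < ε < 1/2` with `F^{1/ε,1/ε}_x(μ,ν) < ε`,
with value `1/2` if no such `ε` exists. -/
noncomputable def Fx {X : Type*} [MetricSpace X] [MeasurableSpace X]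
    (x : X) (μ ν : Measure X) : ℝ :=
  sInf ({1/2} ∪ {ε : ℝ | 0 < ε ∧ ε < 1/2 ∧ FLr x (1/ε) (1/ε) μ ν < ε})

section SS
variable {X : Type*} [MetricSpace X] [MeasurableSpace X] [BorelSpace X]

/-- The defining set of `FLr`. -/
def SS (x : X) (L r : ℝ) (μ ν : Measure X) : Set ℝ :=
  {t : ℝ | ∃ g : X → ℝ, (∀ y, g y ∈ Set.Icc (-1:ℝ) 1) ∧
    LipschitzWith (Real.toNNReal L) g ∧ tsupport g ⊆ closedBall x r ∧
    t = (∫ y, g y ∂μ) - ∫ y, g y ∂ν}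

lemma FLr_eq_sSup (x : X) (L r : ℝ) (μ ν : Measure X) :
    FLr x L r μ ν = sSup (SS x L r μ ν) := rfl

lemma zero_mem_SS (x : X) (L r : ℝ) (μ ν : Measure X) : (0:ℝ) ∈ SS x L r μ ν := by
  refine ⟨fun _ => 0, fun y => ⟨by norm_num, by norm_num⟩,
    (LipschitzWith.const 0).weaken zero_le, ?_, by simp⟩
  show tsupport (0 : X → ℝ) ⊆ _
  rw [tsupport_eq_empty_iff.mpr rfl]
  exact Set.empty_subset _

lemma integrable_admissible {μ : Measure X} (hμ : ∀ y r, μ (closedBall y r) < ⊤)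
    {x : X} {r : ℝ} {g : X → ℝ} (hb : ∀ y, g y ∈ Set.Icc (-1:ℝ) 1)
    (hc : Continuous g) (hs : tsupport g ⊆ closedBall x r) : Integrable g μ := by
  refine ⟨hc.aestronglyMeasurable, ?_⟩
  rw [hasFiniteIntegral_def]
  calc ∫⁻ a, ‖g a‖₊ ∂μ
      ≤ ∫⁻ a, (closedBall x r).indicator (fun _ => (1:ℝ≥0∞)) a ∂μ := by
        apply lintegral_mono
        intro a
        show (‖g a‖₊ : ℝ≥0∞) ≤ _
        by_cases h : a ∈ tsupport g
        · rw [Set.indicator_of_mem (hs h)]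
          have h1 : |g a| ≤ 1 := abs_le.mpr ⟨(hb a).1, (hb a).2⟩
          have h2 : ‖g a‖₊ ≤ 1 := by
            rw [← NNReal.coe_le_coe]; simpa [Real.norm_eq_abs] using h1
          exact_mod_cast h2
        · simp [image_eq_zero_of_notMem_tsupport h]
    _ = μ (closedBall x r) := by
        rw [lintegral_indicator measurableSet_closedBall]; simp
    _ < ⊤ := hμ x r

lemma SS_le_bound {x : X} {L r : ℝ} {μ ν : Measure X}
    (hμ : ∀ y r, μ (closedBall y r) < ⊤) (hν : ∀ y r, ν (closedBall y r) < ⊤)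
    {t : ℝ} (ht : t ∈ SS x L r μ ν) :
    t ≤ (μ (closedBall x r)).toReal + (ν (closedBall x r)).toReal := by
  obtain ⟨g, hb, hl, hs, rfl⟩ := ht
  have key : ∀ (m : Measure X), (∀ y r, m (closedBall y r) < ⊤) →
      |∫ y, g y ∂m| ≤ (m (closedBall x r)).toReal := by
    intro m hm
    have hint : Integrable g m := integrable_admissible hm hb hl.continuous hs
    have hindint : Integrable ((closedBall x r).indicator (fun _ => (1:ℝ))) m :=
      (integrable_indicator_iff measurableSet_closedBall).2
        (integrableOn_const (hm x r).ne)
    calc |∫ y, g y ∂m| ≤ ∫ y, ‖g y‖ ∂m := by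
          simpa [Real.norm_eq_abs] using norm_integral_le_integral_norm (μ := m) g
      _ ≤ ∫ y, (closedBall x r).indicator (fun _ => (1:ℝ)) y ∂m := by
          apply integral_mono hint.norm hindint
          intro a
          show ‖g a‖ ≤ _
          by_cases h : a ∈ tsupport g
          · rw [Set.indicator_of_mem (hs h), Real.norm_eq_abs]
            exact abs_le.mpr ⟨(hb a).1, (hb a).2⟩
          · rw [image_eq_zero_of_notMem_tsupport h]
            simpa using Set.indicator_nonneg (fun _ _ => zero_le_one) a
      _ = (m (closedBall x r)).toReal := by
          rw [integral_indicator_const _ measurableSet_closedBall]; simp; rfl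
  have h1 := key μ hμ
  have h2 := key ν hν
  have := abs_le.mp h1
  have := abs_le.mp h2
  linarith [(abs_le.mp h1).2, (abs_le.mp h2).1]

lemma bddAbove_SS {x : X} {L r : ℝ} {μ ν : Measure X}
    (hμ : ∀ y r, μ (closedBall y r) < ⊤) (hν : ∀ y r, ν (closedBall y r) < ⊤) :
    BddAbove (SS x L r μ ν) :=
  ⟨_, fun _ ht => SS_le_bound hμ hν ht⟩

lemma FLr_nonneg {x : X} {L r : ℝ} {μ ν : Measure X}
    (hμ : ∀ y r, μ (closedBall y r) < ⊤) (hν : ∀ y r, ν (closedBall y r) < ⊤) :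
    0 ≤ FLr x L r μ ν :=
  le_csSup (bddAbove_SS hμ hν) (zero_mem_SS x L r μ ν)

lemma SS_subset_symm (x : X) (L r : ℝ) (μ ν : Measure X) :
    SS x L r μ ν ⊆ SS x L r ν μ := by
  rintro t ⟨g, hb, hl, hs, rfl⟩
  refine ⟨fun y => -g y, fun y => ⟨by simpa using neg_le_neg (hb y).2,
    by simpa using neg_le_neg (hb y).1⟩,
    hl.neg, ?_, by simp [integral_neg]; ring⟩
  have hsup : Function.support (fun y => -g y) = Function.support g := by
    ext y; simp
  rw [tsupport, hsup]
  exact hs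

lemma SS_symm (x : X) (L r : ℝ) (μ ν : Measure X) :
    SS x L r μ ν = SS x L r ν μ :=
  Set.Subset.antisymm (SS_subset_symm x L r μ ν) (SS_subset_symm x L r ν μ)

lemma FLr_symm (x : X) (L r : ℝ) (μ ν : Measure X) :
    FLr x L r μ ν = FLr x L r ν μ := by
  rw [FLr_eq_sSup, FLr_eq_sSup, SS_symm]

lemma FLr_mono {x : X} {L r L' r' : ℝ} {μ ν : Measure X}
    (hμ : ∀ y r, μ (closedBall y r) < ⊤) (hν : ∀ y r, ν (closedBall y r) < ⊤)
    (hL : L ≤ L') (hr : r ≤ r') : FLr x L r μ ν ≤ FLr x L' r' μ ν := by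
  rw [FLr_eq_sSup, FLr_eq_sSup]
  refine csSup_le_csSup (bddAbove_SS hμ hν) ⟨0, zero_mem_SS x L r μ ν⟩ ?_
  rintro t ⟨g, hb, hl, hs, rfl⟩
  exact ⟨g, hb, hl.weaken (Real.toNNReal_le_toNNReal hL),
    hs.trans (closedBall_subset_closedBall hr), rfl⟩

lemma FLr_triangle {x : X} {L r : ℝ} {μ ν lam : Measure X}
    (hμ : ∀ y r, μ (closedBall y r) < ⊤) (hν : ∀ y r, ν (closedBall y r) < ⊤)
    (hlam : ∀ y r, lam (closedBall y r) < ⊤) :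
    FLr x L r μ lam ≤ FLr x L r μ ν + FLr x L r ν lam := by
  rw [FLr_eq_sSup]
  refine csSup_le ⟨0, zero_mem_SS x L r μ lam⟩ ?_
  rintro t ⟨g, hb, hl, hs, rfl⟩
  have h1 : (∫ y, g y ∂μ) - ∫ y, g y ∂ν ≤ FLr x L r μ ν :=
    le_csSup (bddAbove_SS hμ hν) ⟨g, hb, hl, hs, rfl⟩
  have h2 : (∫ y, g y ∂ν) - ∫ y, g y ∂lam ≤ FLr x L r ν lam :=
    le_csSup (bddAbove_SS hν hlam) ⟨g, hb, hl, hs, rfl⟩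
  linarith

end SS

section FX
variable {X : Type*} [MetricSpace X] [MeasurableSpace X] [BorelSpace X]

/-- The defining set of `Fx`. -/
def AA (x : X) (μ ν : Measure X) : Set ℝ :=
  {1/2} ∪ {ε : ℝ | 0 < ε ∧ ε < 1/2 ∧ FLr x (1/ε) (1/ε) μ ν < ε}

lemma Fx_eq_sInf (x : X) (μ ν : Measure X) : Fx x μ ν = sInf (AA x μ ν) := rfl

lemma half_mem_AA (x : X) (μ ν : Measure X) : (1/2 : ℝ) ∈ AA x μ ν :=
  Or.inl rfl

lemma AA_nonempty (x : X) (μ ν : Measure X) : (AA x μ ν).Nonempty :=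
  ⟨1/2, half_mem_AA x μ ν⟩

lemma AA_nonneg (x : X) (μ ν : Measure X) : ∀ ε ∈ AA x μ ν, (0:ℝ) ≤ ε := by
  rintro ε (rfl | ⟨h, _, _⟩)
  · norm_num
  · exact le_of_lt h

lemma bddBelow_AA (x : X) (μ ν : Measure X) : BddBelow (AA x μ ν) :=
  ⟨0, AA_nonneg x μ ν⟩

lemma Fx_nonneg' (x : X) (μ ν : Measure X) : 0 ≤ Fx x μ ν :=
  le_csInf (AA_nonempty x μ ν) (AA_nonneg x μ ν)

lemma Fx_le_half (x : X) (μ ν : Measure X) : Fx x μ ν ≤ 1/2 :=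
  csInf_le (bddBelow_AA x μ ν) (half_mem_AA x μ ν)

lemma AA_symm (x : X) (μ ν : Measure X) : AA x μ ν = AA x ν μ := by
  unfold AA
  congr 1
  ext ε
  rw [Set.mem_setOf_eq, Set.mem_setOf_eq, FLr_symm]

lemma Fx_symm' (x : X) (μ ν : Measure X) : Fx x μ ν = Fx x ν μ := by
  rw [Fx_eq_sInf, Fx_eq_sInf, AA_symm]

lemma Fx_triangle {x : X} {μ ν lam : Measure X}
    (hμ : ∀ y r, μ (closedBall y r) < ⊤) (hν : ∀ y r, ν (closedBall y r) < ⊤)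
    (hlam : ∀ y r, lam (closedBall y r) < ⊤) :
    Fx x μ lam ≤ Fx x μ ν + Fx x ν lam := by
  have key : ∀ a ∈ AA x μ ν, ∀ b ∈ AA x ν lam, Fx x μ lam ≤ a + b := by
    intro a ha b hb
    by_cases hab : (1:ℝ)/2 ≤ a + b
    · exact (Fx_le_half x μ lam).trans hab
    push_neg at hab
    have ha' : 0 < a ∧ a < 1/2 ∧ FLr x (1/a) (1/a) μ ν < a := by
      rcases ha with rfl | h
      · exfalso; have := AA_nonneg x ν lam b hb; linarith
      · exact h
    have hb' : 0 < b ∧ b < 1/2 ∧ FLr x (1/b) (1/b) ν lam < b := by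
      rcases hb with rfl | h
      · exfalso; linarith [ha'.1]
      · exact h
    obtain ⟨hap, _, haF⟩ := ha'
    obtain ⟨hbp, _, hbF⟩ := hb'
    have habp : 0 < a + b := by linarith
    have h1a : 1/(a+b) ≤ 1/a := by
      apply one_div_le_one_div_of_le hap; linarith
    have h1b : 1/(a+b) ≤ 1/b := by
      apply one_div_le_one_div_of_le hbp; linarith
    have hmem : a + b ∈ AA x μ lam := by
      refine Or.inr ⟨habp, hab, ?_⟩
      calc FLr x (1/(a+b)) (1/(a+b)) μ lam
          ≤ FLr x (1/(a+b)) (1/(a+b)) μ ν + FLr x (1/(a+b)) (1/(a+b)) ν lam :=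
            FLr_triangle hμ hν hlam
        _ ≤ FLr x (1/a) (1/a) μ ν + FLr x (1/b) (1/b) ν lam := by
            gcongr
            exacts [FLr_mono hμ hν h1a h1a, FLr_mono hν hlam h1b h1b]
        _ < a + b := by linarith
    exact csInf_le (bddBelow_AA x μ lam) hmem
  have h1 : ∀ b ∈ AA x ν lam, Fx x μ lam - b ≤ Fx x μ ν := by
    intro b hb
    rw [Fx_eq_sInf x μ ν]
    refine le_csInf (AA_nonempty x μ ν) fun a ha => ?_
    linarith [key a ha b hb]
  have h2 : Fx x μ lam - Fx x μ ν ≤ Fx x ν lam := by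
    rw [Fx_eq_sInf x ν lam]
    refine le_csInf (AA_nonempty x ν lam) fun b hb => ?_
    linarith [h1 b hb]
  linarith

lemma FLr_self (x : X) (L r : ℝ) (μ : Measure X) : FLr x L r μ μ = 0 := by
  rw [FLr_eq_sSup]
  have hub : ∀ t ∈ SS x L r μ μ, t ≤ 0 := by
    rintro t ⟨g, _, _, _, rfl⟩; simp
  exact le_antisymm (csSup_le ⟨0, zero_mem_SS x L r μ μ⟩ hub)
    (le_csSup ⟨0, hub⟩ (zero_mem_SS x L r μ μ))

lemma Fx_self (x : X) (μ : Measure X) : Fx x μ μ = 0 := by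
  refine le_antisymm ?_ (Fx_nonneg' x μ μ)
  refine le_of_forall_pos_le_add fun δ hδ => ?_
  have hε : (0:ℝ) < min δ (1/4) := by positivity
  have hmem : min δ (1/4) ∈ AA x μ μ := by
    refine Or.inr ⟨hε, ?_, ?_⟩
    · calc min δ (1/4) ≤ 1/4 := min_le_right _ _
        _ < 1/2 := by norm_num
    · rw [FLr_self]; exact hε
  calc Fx x μ μ ≤ min δ (1/4) := csInf_le (bddBelow_AA x μ μ) hmem
    _ ≤ δ := min_le_left _ _
    _ = 0 + δ := by ring

end FX

section EQ
variable {X : Type*} [MetricSpace X] [MeasurableSpace X] [BorelSpace X]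
variable {x : X} {μ ν : Measure X}

lemma FLr_eq_zero_of_Fx_eq_zero (hμ : ∀ y r, μ (closedBall y r) < ⊤)
    (hν : ∀ y r, ν (closedBall y r) < ⊤) (h0 : Fx x μ ν = 0) (L r : ℝ) :
    FLr x L r μ ν = 0 := by
  refine le_antisymm ?_ (FLr_nonneg hμ hν)
  refine le_of_forall_pos_le_add fun δ hδ => ?_
  set M : ℝ := max 1 (max L r) with hM
  have hMpos : (0:ℝ) < M := lt_of_lt_of_le one_pos (le_max_left _ _)
  have hη : (0:ℝ) < min δ (min (1/M) (1/4)) := by positivity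
  have hlt : sInf (AA x μ ν) < min δ (min (1/M) (1/4)) := by
    rw [← Fx_eq_sInf, h0]; exact hη
  obtain ⟨a, ha, halt⟩ := exists_lt_of_csInf_lt (AA_nonempty x μ ν) hlt
  have ha4 : a < 1/4 :=
    lt_of_lt_of_le halt ((min_le_right _ _).trans (min_le_right _ _))
  have ha' : 0 < a ∧ a < 1/2 ∧ FLr x (1/a) (1/a) μ ν < a := by
    rcases ha with rfl | h
    · exfalso; norm_num at ha4
    · exact h
  obtain ⟨hap, _, haF⟩ := ha'
  have haM : a ≤ 1/M :=
    le_of_lt (lt_of_lt_of_le halt ((min_le_right _ _).trans (min_le_left _ _)))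
  have hMa : M ≤ 1/a := by
    have := one_div_le_one_div_of_le hap haM
    rwa [one_div_one_div] at this
  have hL : L ≤ 1/a := le_trans ((le_max_left L r).trans (le_max_right _ _)) hMa
  have hr : r ≤ 1/a := le_trans ((le_max_right L r).trans (le_max_right _ _)) hMa
  calc FLr x L r μ ν ≤ FLr x (1/a) (1/a) μ ν := FLr_mono hμ hν hL hr
    _ ≤ a := le_of_lt haF
    _ ≤ 0 + δ := by
        have : a < δ := lt_of_lt_of_le halt (min_le_left _ _)
        linarith

lemma integral_eq_of_Fx_eq_zero (hμ : ∀ y r, μ (closedBall y r) < ⊤)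
    (hν : ∀ y r, ν (closedBall y r) < ⊤) (h0 : Fx x μ ν = 0) {L r : ℝ} {g : X → ℝ}
    (hb : ∀ y, g y ∈ Set.Icc (-1:ℝ) 1) (hl : LipschitzWith (Real.toNNReal L) g)
    (hs : tsupport g ⊆ closedBall x r) :
    (∫ y, g y ∂μ) = ∫ y, g y ∂ν := by
  have hmem : (∫ y, g y ∂μ) - ∫ y, g y ∂ν ∈ SS x L r μ ν := ⟨g, hb, hl, hs, rfl⟩
  have h1 : (∫ y, g y ∂μ) - ∫ y, g y ∂ν ≤ 0 := by
    calc (∫ y, g y ∂μ) - ∫ y, g y ∂ν ≤ sSup (SS x L r μ ν) :=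
          le_csSup (bddAbove_SS hμ hν) hmem
      _ = 0 := by rw [← FLr_eq_sSup]; exact FLr_eq_zero_of_Fx_eq_zero hμ hν h0 L r
  have hmem2 : (∫ y, g y ∂ν) - ∫ y, g y ∂μ ∈ SS x L r μ ν := by
    rw [SS_symm]; exact ⟨g, hb, hl, hs, rfl⟩
  have h2 : (∫ y, g y ∂ν) - ∫ y, g y ∂μ ≤ 0 := by
    calc (∫ y, g y ∂ν) - ∫ y, g y ∂μ ≤ sSup (SS x L r μ ν) :=
          le_csSup (bddAbove_SS hμ hν) hmem2
      _ = 0 := by rw [← FLr_eq_sSup]; exact FLr_eq_zero_of_Fx_eq_zero hμ hν h0 L r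
  linarith

lemma measure_closed_bounded_eq (hμ : ∀ y r, μ (closedBall y r) < ⊤)
    (hν : ∀ y r, ν (closedBall y r) < ⊤) (h0 : Fx x μ ν = 0)
    {C : Set X} (hC : IsClosed C) {R : ℝ} (hCR : C ⊆ closedBall x R) :
    μ C = ν C := by
  rcases C.eq_empty_or_nonempty with rfl | hne
  · simp
  -- the approximating functions
  set g : ℕ → X → ℝ := fun n y => max 0 (1 - (n+1 : ℝ) * infDist y C) with hg
  have hgb : ∀ n y, g n y ∈ Set.Icc (-1:ℝ) 1 := by
    intro n y
    constructor
    · calc (-1:ℝ) ≤ 0 := by norm_num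
        _ ≤ g n y := le_max_left _ _
    · apply max_le (by norm_num)
      have h1 : (0:ℝ) ≤ (n+1 : ℝ) * infDist y C :=
        mul_nonneg (by positivity) infDist_nonneg
      linarith
  have hgl : ∀ n : ℕ, LipschitzWith (Real.toNNReal (n+1 : ℝ)) (g n) := by
    intro n
    apply LipschitzWith.of_dist_le_mul
    intro y z
    have h1 : dist (g n y) (g n z) ≤ |(1 - (n+1 : ℝ) * infDist y C) -
        (1 - (n+1 : ℝ) * infDist z C)| := by
      rw [Real.dist_eq, hg]
      simpa [max_comm] using abs_max_sub_max_le_abs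
        (1 - (n+1 : ℝ) * infDist y C) (1 - (n+1 : ℝ) * infDist z C) 0
    have h2 : |(1 - (n+1 : ℝ) * infDist y C) - (1 - (n+1 : ℝ) * infDist z C)|
        = (n+1 : ℝ) * |infDist y C - infDist z C| := by
      have he : (1 - (n+1:ℝ) * infDist y C) - (1 - (n+1:ℝ) * infDist z C)
          = (n+1:ℝ) * (infDist z C - infDist y C) := by ring
      rw [he, abs_mul, abs_of_nonneg (show (0:ℝ) ≤ (n+1:ℝ) by positivity), abs_sub_comm]
    have h3 : |infDist y C - infDist z C| ≤ dist y z := by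
      have := (lipschitz_infDist_pt C).dist_le_mul y z
      rwa [Real.dist_eq, NNReal.coe_one, one_mul] at this
    have h4 : Real.toNNReal (n+1 : ℝ) * dist y z = (n+1 : ℝ) * dist y z := by
      rw [Real.coe_toNNReal _ (by positivity)]
    rw [h4]
    calc dist (g n y) (g n z) ≤ (n+1 : ℝ) * |infDist y C - infDist z C| := by
          rw [← h2]; exact h1
      _ ≤ (n+1 : ℝ) * dist y z := by
          apply mul_le_mul_of_nonneg_left h3 (by positivity)
  have hgs : ∀ n : ℕ, tsupport (g n) ⊆ closedBall x (R + 1) := by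
    intro n
    apply closure_minimal _ isClosed_closedBall
    intro y hy
    have h1 : 1 - (n+1 : ℝ) * infDist y C > 0 := by
      by_contra h
      push_neg at h
      apply hy
      simp only [hg, Function.mem_support, ne_eq, not_not]
      exact max_eq_left (by linarith)
    have h2 : infDist y C < 1 := by
      nlinarith [infDist_nonneg (x := y) (s := C),
        (show (1:ℝ) ≤ (n+1:ℝ) by linarith [Nat.cast_nonneg (α := ℝ) n])]
    obtain ⟨c, hcC, hc⟩ := (infDist_lt_iff hne).mp h2
    have hc2 : dist y c ≤ 1 := le_of_lt hc
    have hc3 : dist c x ≤ R := mem_closedBall.mp (hCR hcC)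
    rw [mem_closedBall]
    calc dist y x ≤ dist y c + dist c x := dist_triangle y c x
      _ ≤ 1 + R := add_le_add hc2 hc3
      _ = R + 1 := by ring
  -- pointwise convergence
  have hlim : ∀ y, Filter.Tendsto (fun n => g n y) Filter.atTop
      (nhds (Set.indicator C (fun _ => (1:ℝ)) y)) := by
    intro y
    by_cases hy : y ∈ C
    · rw [Set.indicator_of_mem hy]
      have : ∀ n : ℕ, g n y = 1 := by
        intro n
        rw [hg]
        simp [infDist_zero_of_mem hy]
      simp only [this]; exact tendsto_const_nhds
    · rw [Set.indicator_of_notMem hy]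
      have hd : 0 < infDist y C := (hC.notMem_iff_infDist_pos hne).mp hy
      apply Filter.Tendsto.congr' _ (tendsto_const_nhds (x := (0:ℝ)))
      filter_upwards [Filter.eventually_ge_atTop ⌈1/infDist y C⌉₊] with n hn
      have h1 : 1/infDist y C ≤ (n:ℝ) := le_trans (Nat.le_ceil _) (by exact_mod_cast hn)
      have h2 : 1 ≤ (n+1 : ℝ) * infDist y C := by
        have := (div_le_iff₀ hd).mp h1
        nlinarith
      rw [hg]
      exact (max_eq_left (by linarith)).symm
  -- dominated convergence
  have hint : ∀ (m : Measure X), (∀ y r, m (closedBall y r) < ⊤) →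
      Filter.Tendsto (fun n => ∫ y, g n y ∂m) Filter.atTop ((nhds (m C).toReal)) := by
    intro m hm
    have hCm : MeasurableSet C := hC.measurableSet
    have hbint : Integrable ((closedBall x (R+1)).indicator (fun _ => (1:ℝ))) m :=
      (integrable_indicator_iff measurableSet_closedBall).2
        (integrableOn_const (hm x (R+1)).ne)
    have h := tendsto_integral_of_dominated_convergence
      (μ := m) (F := fun n y => g n y) (f := Set.indicator C (fun _ => (1:ℝ)))
      ((closedBall x (R+1)).indicator (fun _ => (1:ℝ)))
      (fun n => ((hgl n).continuous).aestronglyMeasurable)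
      hbint
      (fun n => Filter.Eventually.of_forall fun a => ?_)
      (Filter.Eventually.of_forall hlim)
    · have heq : (∫ y, Set.indicator C (fun _ => (1:ℝ)) y ∂m) = (m C).toReal := by
        rw [integral_indicator_const _ hCm]; simp; rfl
      rwa [heq] at h
    · show ‖g n a‖ ≤ _
      by_cases h : a ∈ tsupport (g n)
      · rw [Set.indicator_of_mem (hgs n h), Real.norm_eq_abs]
        exact abs_le.mpr ⟨(hgb n a).1, (hgb n a).2⟩
      · rw [image_eq_zero_of_notMem_tsupport h]
        simpa using Set.indicator_nonneg (fun _ _ => zero_le_one) a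
  have heqn : ∀ n : ℕ, (∫ y, g n y ∂μ) = ∫ y, g n y ∂ν := fun n =>
    integral_eq_of_Fx_eq_zero hμ hν h0 (hgb n) (hgl n) (hgs n)
  have hμν : (μ C).toReal = (ν C).toReal := by
    have h1 := hint μ hμ
    have h2 := hint ν hν
    rw [show (fun n => ∫ y, g n y ∂μ) = (fun n => ∫ y, g n y ∂ν) from funext heqn] at h1
    exact tendsto_nhds_unique h1 h2
  have hμfin : μ C ≠ ⊤ := ((measure_mono hCR).trans_lt (hμ x R)).ne
  have hνfin : ν C ≠ ⊤ := ((measure_mono hCR).trans_lt (hν x R)).ne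
  exact (ENNReal.toReal_eq_toReal_iff' hμfin hνfin).mp hμν

lemma eq_of_Fx_eq_zero (hμ : ∀ y r, μ (closedBall y r) < ⊤)
    (hν : ∀ y r, ν (closedBall y r) < ⊤) (h0 : Fx x μ ν = 0) : μ = ν := by
  have hclosed : ∀ C : Set X, IsClosed C → μ C = ν C := by
    intro C hC
    have hun : C = ⋃ n : ℕ, C ∩ closedBall x n := by
      rw [← Set.inter_iUnion, iUnion_closedBall_nat, Set.inter_univ]
    have hmono : Monotone (fun n : ℕ => C ∩ closedBall x n) := by
      intro a b hab
      exact Set.inter_subset_inter_right _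
        (closedBall_subset_closedBall (by exact_mod_cast hab))
    have heach : ∀ n : ℕ, μ (C ∩ closedBall x n) = ν (C ∩ closedBall x n) := fun n =>
      measure_closed_bounded_eq hμ hν h0 (hC.inter isClosed_closedBall)
        Set.inter_subset_right
    rw [hun, hmono.measure_iUnion,
      hmono.measure_iUnion]
    exact iSup_congr heach
  refine Measure.ext_of_generateFrom_of_iUnion {s : Set X | IsClosed s}
    (fun n : ℕ => closedBall x n) ?_ isPiSystem_isClosed (iUnion_closedBall_nat x)
    (fun n => isClosed_closedBall) (fun n => (hμ x n).ne) hclosed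
  exact BorelSpace.measurable_eq.trans (borel_eq_generateFrom_isClosed)

end EQ

theorem stmt_6 {X : Type*} [MetricSpace X] [MeasurableSpace X] [BorelSpace X] (x : X) :
    (∀ μ ν : Measure X, (∀ y r, μ (closedBall y r) < ⊤) → (∀ y r, ν (closedBall y r) < ⊤) →
      0 ≤ Fx x μ ν) ∧
    (∀ μ ν : Measure X, (∀ y r, μ (closedBall y r) < ⊤) → (∀ y r, ν (closedBall y r) < ⊤) →
      Fx x μ ν = Fx x ν μ) ∧
    (∀ μ ν : Measure X, (∀ y r, μ (closedBall y r) < ⊤) → (∀ y r, ν (closedBall y r) < ⊤) →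
      (Fx x μ ν = 0 ↔ μ = ν)) ∧
    (∀ μ ν lam : Measure X, (∀ y r, μ (closedBall y r) < ⊤) →
      (∀ y r, ν (closedBall y r) < ⊤) → (∀ y r, lam (closedBall y r) < ⊤) →
      Fx x μ lam ≤ Fx x μ ν + Fx x ν lam) := by
  refine ⟨fun μ ν _ _ => Fx_nonneg' x μ ν,
    fun μ ν _ _ => Fx_symm' x μ ν,
    fun μ ν hμ hν => ⟨fun h => eq_of_Fx_eq_zero hμ hν h, fun h => h ▸ Fx_self x μ⟩,
    fun μ ν lam hμ hν hlam => Fx_triangle hμ hν hlam⟩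
end

section
/- Let X be a complete separable metric space, x ∈ X, and μ_i, μ locally finite Borel measures on X. Then F_x(μ_i, μ) → 0 if and only if μ_i converges to μ in the weak* sense, i.e. ∫ g dμ_i → ∫ g dμ for every bounded continuous g : X → ℝ with bounded support. -/
open MeasureTheory Metric

open Filter Set BoundedContinuousFunction
open scoped NNReal ENNReal

section AuxAll
variable {X : Type*} [MetricSpace X] [MeasurableSpace X] [BorelSpace X]

lemma aux_integrable (ρ : Measure X) {g : X → ℝ} (hc : Continuous g)
    {C : ℝ} (hC : ∀ y, |g y| ≤ C) {x : X} {r : ℝ} (hs : tsupport g ⊆ closedBall x r)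
    (hρ : ρ (closedBall x r) < ⊤) : Integrable g ρ := by
  refine Integrable.mono' (g := (closedBall x r).indicator fun _ => C)
    ((integrable_indicator_iff measurableSet_closedBall).mpr
      ((integrableOn_const_iff).mpr (Or.inr hρ)))
    hc.aestronglyMeasurable (Filter.Eventually.of_forall ?_)
  intro y
  by_cases hy : y ∈ closedBall x r
  · simpa [Set.indicator_of_mem hy] using hC y
  · have hgy : g y = 0 := image_eq_zero_of_notMem_tsupport (fun h => hy (hs h))
    simp [Set.indicator_of_notMem hy, hgy]

lemma aux_abs_integral (ρ : Measure X) {g : X → ℝ} (hc : Continuous g)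
    (hC : ∀ y, |g y| ≤ 1) {x : X} {r : ℝ} (hs : tsupport g ⊆ closedBall x r)
    (hρ : ρ (closedBall x r) < ⊤) :
    |∫ y, g y ∂ρ| ≤ (ρ (closedBall x r)).toReal := by
  have h1 : |∫ y, g y ∂ρ| ≤ ∫ y, |g y| ∂ρ := by
    simpa [Real.norm_eq_abs] using norm_integral_le_integral_norm (μ := ρ) g
  have h2 : ∫ y, |g y| ∂ρ ≤ ∫ y, (closedBall x r).indicator (fun _ => (1:ℝ)) y ∂ρ := by
    refine integral_mono_of_nonneg (Filter.Eventually.of_forall fun y => abs_nonneg _)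
      ((integrable_indicator_iff measurableSet_closedBall).mpr
        ((integrableOn_const_iff).mpr (Or.inr hρ)))
      (Filter.Eventually.of_forall ?_)
    intro y
    by_cases hy : y ∈ closedBall x r
    · simpa [Set.indicator_of_mem hy] using hC y
    · have hgy : g y = 0 := image_eq_zero_of_notMem_tsupport (fun h => hy (hs h))
      simp [Set.indicator_of_notMem hy, hgy]
  have h3 : ∫ y, (closedBall x r).indicator (fun _ => (1:ℝ)) y ∂ρ
      = (ρ (closedBall x r)).toReal := by
    rw [integral_indicator_const (1:ℝ) measurableSet_closedBall]
    simp [measureReal_def]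
  linarith


noncomputable def upApp (g : X → ℝ) (n : ℕ) (y : X) : ℝ :=
  ⨆ z, (g z - ((n : ℝ) + 2) * dist y z)

variable {g : X → ℝ}

lemma up_bdd (hg1 : ∀ y, |g y| ≤ 1) (n : ℕ) (y : X) :
    BddAbove (Set.range fun z => g z - ((n : ℝ) + 2) * dist y z) := by
  refine ⟨1, ?_⟩
  rintro _ ⟨z, rfl⟩
  dsimp only
  have h1 := (abs_le.mp (hg1 z)).2
  have h2 : (0:ℝ) ≤ ((n : ℝ) + 2) * dist y z := by positivity
  linarith

lemma up_ge (hg1 : ∀ y, |g y| ≤ 1) [Nonempty X] (n : ℕ) (y : X) : g y ≤ upApp g n y := by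
  have := le_ciSup (up_bdd hg1 n y) y
  simpa [dist_self, upApp] using this

lemma up_le_one (hg1 : ∀ y, |g y| ≤ 1) [Nonempty X] (n : ℕ) (y : X) : upApp g n y ≤ 1 := by
  refine ciSup_le fun z => ?_
  have h1 := (abs_le.mp (hg1 z)).2
  have h2 : (0:ℝ) ≤ ((n : ℝ) + 2) * dist y z := by positivity
  linarith

lemma up_abs_le (hg1 : ∀ y, |g y| ≤ 1) [Nonempty X] (n : ℕ) (y : X) : |upApp g n y| ≤ 1 := by
  rw [abs_le]
  refine ⟨?_, up_le_one hg1 n y⟩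
  have := up_ge hg1 n y
  have := (abs_le.mp (hg1 y)).1
  linarith

lemma up_lipschitz (hg1 : ∀ y, |g y| ≤ 1) [Nonempty X] (n : ℕ) :
    LipschitzWith (Real.toNNReal ((n : ℝ) + 2)) (upApp g n) := by
  have key : ∀ y y' : X, upApp g n y ≤ upApp g n y' + ((n : ℝ) + 2) * dist y y' := by
    intro y y'
    refine ciSup_le fun z => ?_
    have htri : dist y' z ≤ dist y' y + dist y z := dist_triangle y' y z
    have h1 : g z - ((n : ℝ) + 2) * dist y' z ≤ upApp g n y' := le_ciSup (up_bdd hg1 n y') z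
    have h2 : (0:ℝ) ≤ (n : ℝ) + 2 := by positivity
    nlinarith [dist_comm y y', dist_comm y' y]
  refine LipschitzWith.of_dist_le_mul fun y y' => ?_
  rw [Real.dist_eq, Real.coe_toNNReal _ (by positivity), abs_sub_le_iff]
  constructor
  · have := key y y'
    have := dist_comm y y'
    nlinarith [key y y', dist_nonneg (x := y) (y := y')]
  · nlinarith [key y' y, dist_comm y' y]

lemma up_zero (hg1 : ∀ y, |g y| ≤ 1) [Nonempty X] {x : X} {r : ℝ} (hr : 0 ≤ r)
    (hgs : tsupport g ⊆ closedBall x r) (n : ℕ) {y : X}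
    (hy : y ∉ closedBall x (r + 1)) : upApp g n y = 0 := by
  have hgy : g y = 0 := by
    refine image_eq_zero_of_notMem_tsupport fun h => hy ?_
    exact closedBall_subset_closedBall (by linarith) (hgs h)
  refine le_antisymm (ciSup_le fun z => ?_) ?_
  · by_cases hz : z ∈ closedBall x r
    · have hd : (1:ℝ) ≤ dist y z := by
        have h1 : dist y x ≤ dist y z + dist z x := dist_triangle y z x
        have h2 : dist z x ≤ r := mem_closedBall.mp hz
        have h3 : ¬ dist y x ≤ r + 1 := fun h => hy (mem_closedBall.mpr h)
        linarith [not_le.mp h3]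
      have h1 := (abs_le.mp (hg1 z)).2
      have h2 : ((n : ℝ) + 2) * 1 ≤ ((n : ℝ) + 2) * dist y z := by
        refine mul_le_mul_of_nonneg_left hd (by positivity)
      linarith
    · have hgz : g z = 0 := image_eq_zero_of_notMem_tsupport fun h => hz (hgs h)
      have : (0:ℝ) ≤ ((n : ℝ) + 2) * dist y z := by positivity
      linarith [hgz]
  · have := le_ciSup (up_bdd hg1 n y) y
    simpa [dist_self, hgy, upApp] using this

lemma up_tsupport (hg1 : ∀ y, |g y| ≤ 1) [Nonempty X] {x : X} {r : ℝ} (hr : 0 ≤ r)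
    (hgs : tsupport g ⊆ closedBall x r) (n : ℕ) :
    tsupport (upApp g n) ⊆ closedBall x (r + 1) := by
  refine closure_minimal ?_ Metric.isClosed_closedBall
  intro y hy
  by_contra hyc
  exact hy (up_zero hg1 hr hgs n hyc)

lemma up_tendsto (hg1 : ∀ y, |g y| ≤ 1) [Nonempty X] (hgc : Continuous g) (y : X) :
    Tendsto (fun n => upApp g n y) atTop (nhds (g y)) := by
  rw [Metric.tendsto_atTop]
  intro η hη
  obtain ⟨δ, hδ, hδ'⟩ := Metric.continuous_iff.mp hgc y (η/2) (by linarith)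
  obtain ⟨N, hN⟩ := exists_nat_ge (2/δ)
  refine ⟨N, fun n hn => ?_⟩
  have hub : upApp g n y ≤ g y + η/2 := by
    refine ciSup_le fun z => ?_
    by_cases hz : dist z y < δ
    · have := hδ' z hz
      rw [Real.dist_eq] at this
      have h2 : (0:ℝ) ≤ ((n : ℝ) + 2) * dist y z := by positivity
      have := (abs_lt.mp this).2
      linarith
    · have hd : δ ≤ dist y z := by rw [dist_comm]; linarith [not_lt.mp hz]
      have hNn : (2:ℝ)/δ ≤ (n : ℝ) := le_trans hN (by exact_mod_cast hn)
      have h2 : (2:ℝ) ≤ ((n:ℝ) + 2) * dist y z := by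
        have hn2 : (2:ℝ)/δ ≤ (n:ℝ) + 2 := by linarith
        calc (2:ℝ) = (2/δ) * δ := by field_simp
        _ ≤ ((n:ℝ) + 2) * dist y z := by
            apply mul_le_mul hn2 hd (le_of_lt hδ)
            positivity
      have h1 := (abs_le.mp (hg1 z)).2
      have h3 := (abs_le.mp (hg1 y)).1
      linarith
  have hlb := up_ge hg1 n y
  rw [Real.dist_eq, abs_lt]
  constructor <;> linarith

lemma up_integral_tendsto (hg1 : ∀ y, |g y| ≤ 1) [Nonempty X] (hgc : Continuous g) {x : X} {r : ℝ} (hr : 0 ≤ r)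
    (hgs : tsupport g ⊆ closedBall x r) (ρ : Measure X)
    (hρ : ρ (closedBall x (r + 1)) < ⊤) :
    Tendsto (fun n => ∫ y, upApp g n y ∂ρ) atTop (nhds (∫ y, g y ∂ρ)) := by
  refine tendsto_integral_of_dominated_convergence
    ((closedBall x (r + 1)).indicator fun _ => (1:ℝ)) ?_ ?_ ?_ ?_
  · exact fun n => ((up_lipschitz hg1 n).continuous).aestronglyMeasurable
  · exact (integrable_indicator_iff measurableSet_closedBall).mpr
      ((integrableOn_const_iff).mpr (Or.inr hρ))
  · intro n
    refine Filter.Eventually.of_forall fun y => ?_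
    by_cases hy : y ∈ closedBall x (r + 1)
    · simpa [Set.indicator_of_mem hy] using up_abs_le hg1 n y
    · simp [Set.indicator_of_notMem hy, up_zero hg1 hr hgs n hy]
  · exact Filter.Eventually.of_forall fun y => up_tendsto hg1 hgc y


/-- The set defining `FLr` is bounded above. -/
lemma FLr_bddAbove (x : X) (L r : ℝ) (μ ν : Measure X)
    (hμ : μ (closedBall x r) < ⊤) (hν : ν (closedBall x r) < ⊤) :
    BddAbove {t : ℝ | ∃ g : X → ℝ, (∀ y, g y ∈ Set.Icc (-1:ℝ) 1) ∧
      LipschitzWith (Real.toNNReal L) g ∧ tsupport g ⊆ closedBall x r ∧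
      t = (∫ y, g y ∂μ) - ∫ y, g y ∂ν} := by
  refine ⟨(μ (closedBall x r)).toReal + (ν (closedBall x r)).toReal, ?_⟩
  rintro t ⟨g, hg1, hgl, hgs, rfl⟩
  have habs : ∀ y, |g y| ≤ 1 := fun y => abs_le.mpr ⟨(hg1 y).1, (hg1 y).2⟩
  have h1 := aux_abs_integral μ hgl.continuous habs hgs hμ
  have h2 := aux_abs_integral ν hgl.continuous habs hgs hν
  have := abs_sub_abs_le_abs_sub (∫ y, g y ∂μ) (∫ y, g y ∂ν)
  cases' abs_le.mp h1 with h1a h1b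
  cases' abs_le.mp h2 with h2a h2b
  linarith

lemma step1 (x : X) (μs : ℕ → Measure X) (μ : Measure X)
    (hμs : ∀ i (y : X) (r : ℝ), μs i (closedBall y r) < ⊤)
    (hμ : ∀ (y : X) (r : ℝ), μ (closedBall y r) < ⊤)
    (hT : Tendsto (fun i => Fx x (μs i) μ) atTop (nhds 0))
    {K r : ℝ} (hK : 0 ≤ K) (hr : 0 ≤ r) {g : X → ℝ}
    (hg1 : ∀ y, g y ∈ Set.Icc (-1:ℝ) 1)
    (hgl : LipschitzWith (Real.toNNReal K) g)
    (hgs : tsupport g ⊆ closedBall x r) :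
    Tendsto (fun i => ∫ y, g y ∂(μs i)) atTop (nhds (∫ y, g y ∂μ)) := by
  rw [Metric.tendsto_atTop]
  intro η hη
  set η' := min (η/2) (min (1/4) (min (1/(K+1)) (1/(r+1)))) with hη'def
  have hη'pos : 0 < η' := by
    refine lt_min (by linarith) (lt_min (by norm_num) (lt_min ?_ ?_)) <;> positivity
  obtain ⟨N, hN⟩ := Metric.tendsto_atTop.mp hT η' hη'pos
  refine ⟨N, fun i hi => ?_⟩
  have hFx : Fx x (μs i) μ < η' := by
    have := hN i hi
    rw [Real.dist_eq, sub_zero] at this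
    exact lt_of_le_of_lt (le_abs_self _) this
  have hne : ({(1:ℝ)/2} ∪ {ε : ℝ | 0 < ε ∧ ε < 1/2 ∧ FLr x (1/ε) (1/ε) (μs i) μ < ε}).Nonempty :=
    ⟨1/2, Or.inl rfl⟩
  obtain ⟨ε, hεS, hεlt⟩ := exists_lt_of_csInf_lt hne hFx
  have hε14 : ε < 1/4 := lt_of_lt_of_le hεlt (le_trans (min_le_right _ _) (min_le_left _ _))
  rcases hεS with hhalf | ⟨hε0, hε12, hFLr⟩
  · rw [Set.mem_singleton_iff] at hhalf; rw [hhalf] at hε14; norm_num at hε14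
  have hεK : ε < 1/(K+1) := lt_of_lt_of_le hεlt
    (le_trans (min_le_right _ _) (le_trans (min_le_right _ _) (min_le_left _ _)))
  have hεr : ε < 1/(r+1) := lt_of_lt_of_le hεlt
    (le_trans (min_le_right _ _) (le_trans (min_le_right _ _) (min_le_right _ _)))
  have hK' : K < 1/ε := by
    rw [lt_div_iff₀ hε0]
    have h1 : ε * (K+1) < 1 := by
      calc ε * (K+1) < (1/(K+1)) * (K+1) := by
            apply mul_lt_mul_of_pos_right hεK; positivity
      _ = 1 := by field_simp
    nlinarith
  have hr' : r < 1/ε := by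
    rw [lt_div_iff₀ hε0]
    have h1 : ε * (r+1) < 1 := by
      calc ε * (r+1) < (1/(r+1)) * (r+1) := by
            apply mul_lt_mul_of_pos_right hεr; positivity
      _ = 1 := by field_simp
    nlinarith
  -- both g and -g are in the family for (1/ε, 1/ε)
  have hball : closedBall x r ⊆ closedBall x (1/ε) :=
    closedBall_subset_closedBall (le_of_lt hr')
  have hlip : LipschitzWith (Real.toNNReal (1/ε)) g :=
    hgl.weaken (Real.toNNReal_mono (le_of_lt hK'))
  have hbdd := FLr_bddAbove x (1/ε) (1/ε) (μs i) μ (hμs i x (1/ε)) (hμ x (1/ε))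
  have hmem1 : (∫ y, g y ∂(μs i)) - ∫ y, g y ∂μ ≤ FLr x (1/ε) (1/ε) (μs i) μ :=
    le_csSup hbdd ⟨g, hg1, hlip, hgs.trans hball, rfl⟩
  have hmem2 : -((∫ y, g y ∂(μs i)) - ∫ y, g y ∂μ) ≤ FLr x (1/ε) (1/ε) (μs i) μ := by
    have hsupp : tsupport (fun y => -g y) ⊆ closedBall x (1/ε) := by
      refine subset_trans ?_ (hgs.trans hball)
      apply closure_minimal ?_ (isClosed_tsupport g)
      intro y hy
      have : g y ≠ 0 := by
        intro h; apply hy; simp [Function.mem_support, h] at hy ⊢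
      exact subset_closure this
    refine le_csSup hbdd ⟨fun y => -g y, ?_, hlip.neg, hsupp, ?_⟩
    · intro y; constructor
      · have := (hg1 y).2; simp; linarith
      · have := (hg1 y).1; simp; linarith
    · rw [integral_neg, integral_neg]; ring
  rw [Real.dist_eq]
  have : |(∫ y, g y ∂(μs i)) - ∫ y, g y ∂μ| ≤ FLr x (1/ε) (1/ε) (μs i) μ :=
    abs_le.mpr ⟨by linarith, hmem1⟩
  have hηε : ε < η := lt_of_lt_of_le hεlt (le_trans (min_le_left _ _) (by linarith))
  linarith


/-- Forward direction, for `|g| ≤ 1`. -/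
lemma fwd_one (x : X) (μs : ℕ → Measure X) (μ : Measure X)
    (hμs : ∀ i (y : X) (r : ℝ), μs i (closedBall y r) < ⊤)
    (hμ : ∀ (y : X) (r : ℝ), μ (closedBall y r) < ⊤)
    (hT : Tendsto (fun i => Fx x (μs i) μ) atTop (nhds 0))
    {g : X → ℝ} (hgc : Continuous g) (hg1 : ∀ y, |g y| ≤ 1)
    {r : ℝ} (hr : 0 ≤ r) (hgs : tsupport g ⊆ closedBall x r) :
    Tendsto (fun i => ∫ y, g y ∂(μs i)) atTop (nhds (∫ y, g y ∂μ)) := by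
  have : Nonempty X := ⟨x⟩
  rw [Metric.tendsto_atTop]
  intro η hη
  -- lower approximations via -g
  have hng1 : ∀ y, |(-g) y| ≤ 1 := fun y => by simpa using hg1 y
  have hngs : tsupport (-g : X → ℝ) ⊆ closedBall x r := by
    have : tsupport (-g : X → ℝ) = tsupport g := by
      simp [tsupport, Function.support_neg]
    rwa [this]
  -- choose n with both integrals close
  have h1 := Metric.tendsto_atTop.mp
    (up_integral_tendsto hg1 hgc hr hgs μ (hμ x (r+1))) (η/4) (by linarith)
  have h2 := Metric.tendsto_atTop.mp
    (up_integral_tendsto hng1 (hgc.neg) hr hngs μ (hμ x (r+1))) (η/4) (by linarith)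
  obtain ⟨n1, hn1⟩ := h1
  obtain ⟨n2, hn2⟩ := h2
  set n := max n1 n2 with hn
  have hu := hn1 n (le_max_left _ _)
  have hl := hn2 n (le_max_right _ _)
  set U := upApp g n with hU
  set Lo : X → ℝ := fun y => -(upApp (-g) n y) with hLo
  -- step1 for U and Lo
  have hUc : Tendsto (fun i => ∫ y, U y ∂(μs i)) atTop (nhds (∫ y, U y ∂μ)) := by
    refine step1 x μs μ hμs hμ hT (K := (n:ℝ)+2) (by positivity) (r := r+1) (by linarith)
      (fun y => abs_le.mp (up_abs_le hg1 n y)) (up_lipschitz hg1 n) (up_tsupport hg1 hr hgs n)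
  have hLoc : Tendsto (fun i => ∫ y, Lo y ∂(μs i)) atTop (nhds (∫ y, Lo y ∂μ)) := by
    have base : Tendsto (fun i => ∫ y, upApp (-g) n y ∂(μs i)) atTop
        (nhds (∫ y, upApp (-g) n y ∂μ)) :=
      step1 x μs μ hμs hμ hT (K := (n:ℝ)+2) (by positivity) (r := r+1) (by linarith)
        (fun y => abs_le.mp (up_abs_le hng1 n y)) (up_lipschitz hng1 n)
        (up_tsupport hng1 hr hngs n)
    have : ∀ ρ : Measure X, ∫ y, Lo y ∂ρ = -∫ y, upApp (-g) n y ∂ρ := by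
      intro ρ; rw [← integral_neg]
    simp only [this]
    exact base.neg
  obtain ⟨N1, hN1⟩ := Metric.tendsto_atTop.mp hUc (η/4) (by linarith)
  obtain ⟨N2, hN2⟩ := Metric.tendsto_atTop.mp hLoc (η/4) (by linarith)
  refine ⟨max N1 N2, fun i hi => ?_⟩
  have hi1 := hN1 i (le_trans (le_max_left _ _) hi)
  have hi2 := hN2 i (le_trans (le_max_right _ _) hi)
  -- integrability
  have hgint : ∀ ρ : Measure X, (∀ (y : X) (s : ℝ), ρ (closedBall y s) < ⊤) → Integrable g ρ :=
    fun ρ h => aux_integrable ρ hgc hg1 hgs (h x r)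
  have hUint : Integrable U (μs i) :=
    aux_integrable (μs i) (up_lipschitz hg1 n).continuous (up_abs_le hg1 n)
      (up_tsupport hg1 hr hgs n) (hμs i x (r+1))
  have hLoint : Integrable Lo (μs i) := by
    refine Integrable.neg ?_
    exact aux_integrable (μs i) (up_lipschitz hng1 n).continuous (up_abs_le hng1 n)
      (up_tsupport hng1 hr hngs n) (hμs i x (r+1))
  have hle1 : ∫ y, g y ∂(μs i) ≤ ∫ y, U y ∂(μs i) :=
    integral_mono (hgint (μs i) (hμs i)) hUint (fun y => up_ge hg1 n y)
  have hle2 : ∫ y, Lo y ∂(μs i) ≤ ∫ y, g y ∂(μs i) := by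
    refine integral_mono hLoint (hgint (μs i) (hμs i)) (fun y => ?_)
    have := up_ge hng1 n y
    simp only [hLo, Pi.neg_apply] at this ⊢
    linarith
  -- and for μ
  have hleμ1 : |∫ y, U y ∂μ - ∫ y, g y ∂μ| < η/4 := by rwa [Real.dist_eq] at hu
  have hleμ2 : |∫ y, Lo y ∂μ - ∫ y, g y ∂μ| < η/4 := by
    rw [Real.dist_eq] at hl
    have e1 : ∫ y, Lo y ∂μ = -∫ y, upApp (-g) n y ∂μ := by rw [← integral_neg]
    have e2 : ∫ y, (-g) y ∂μ = -∫ y, g y ∂μ := by rw [← integral_neg]; rfl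
    rw [e1]
    rw [e2] at hl
    calc |-∫ y, upApp (-g) n y ∂μ - ∫ y, g y ∂μ|
        = |∫ y, upApp (-g) n y ∂μ - -∫ y, g y ∂μ| := by rw [abs_sub_comm]; ring_nf
      _ < η/4 := hl
  rw [Real.dist_eq] at hi1 hi2 ⊢
  cases' abs_lt.mp hi1 with hi1a hi1b
  cases' abs_lt.mp hi2 with hi2a hi2b
  cases' abs_lt.mp hleμ1 with ha1 hb1
  cases' abs_lt.mp hleμ2 with ha2 hb2
  rw [abs_lt]
  constructor <;> linarith


lemma lp_integral_lipschitz (P Q : Measure X) [IsProbabilityMeasure P] [IsProbabilityMeasure Q]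
    {δ L : ℝ} (δ_pos : 0 < δ) (hL : 0 ≤ L)
    (hPQ : levyProkhorovEDist P Q < ENNReal.ofReal δ)
    {g : X → ℝ} (hg1 : ∀ y, |g y| ≤ 1) (hgl : LipschitzWith (Real.toNNReal L) g) :
    ∫ y, g y ∂P ≤ (∫ y, g y ∂Q) + (L + 2) * δ := by
  set f : X →ᵇ ℝ := BoundedContinuousFunction.mkOfBound
    ⟨fun y => g y + 1, by exact (hgl.continuous).add continuous_const⟩ 2
    (fun a b => by
      simp only [Real.dist_eq, ContinuousMap.coe_mk, add_sub_add_right_eq_sub]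
      have ha := abs_le.mp (hg1 a); have hb := abs_le.mp (hg1 b)
      rw [abs_le]; constructor <;> linarith) with hfdef
  have hfy : ∀ y, f y = g y + 1 := fun y => rfl
  have f_nn : ∀ y : X, 0 ≤ f y := fun y => by
    have := (abs_le.mp (hg1 y)).1; rw [hfy]; linarith
  have hM0 : 0 ≤ ‖f‖ := norm_nonneg f
  have hM2 : ‖f‖ ≤ 2 := by
    refine (BoundedContinuousFunction.norm_le (by norm_num)).mpr fun y => ?_
    rw [hfy, Real.norm_eq_abs, abs_le]
    have := abs_le.mp (hg1 y); constructor <;> linarith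
  set M := ‖f‖
  set c := L * δ with hcdef
  have hc0 : 0 ≤ c := by positivity
  set F : ℝ → ℝ := fun t => (Q {a | t ≤ f a}).toReal with hFdef
  have F_anti : Antitone F := fun s t hst =>
    ENNReal.toReal_mono (measure_ne_top _ _) (measure_mono fun a ha => le_trans hst ha)
  have F_nonneg : ∀ t, 0 ≤ F t := fun t => ENNReal.toReal_nonneg
  have F_le_one : ∀ t, F t ≤ 1 := fun t => by
    have h := ENNReal.toReal_mono (measure_ne_top Q univ) (measure_mono (subset_univ {a | t ≤ f a}))
    simpa [measure_univ] using h
  set T : ℝ → ℝ := fun t => (Q (thickening δ {a | t ≤ f a})).toReal with hTdef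
  have T_anti : Antitone T := fun s t hst =>
    ENNReal.toReal_mono (measure_ne_top _ _)
      (measure_mono (thickening_subset_of_subset δ fun a ha => le_trans hst ha))
  have key := BoundedContinuousFunction.integral_le_of_levyProkhorovEDist_lt P Q δ_pos hPQ f
    (Filter.Eventually.of_forall f_nn)
  -- pointwise thickening bound
  have hTF : ∀ t, T t ≤ F (t - c) := by
    intro t
    refine ENNReal.toReal_mono (measure_ne_top _ _) (measure_mono ?_)
    intro y hy
    obtain ⟨z, hz, hdz⟩ := mem_thickening_iff.mp hy
    have hlip : dist (g y) (g z) ≤ L * dist y z := by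
      have := hgl.dist_le_mul y z
      rwa [Real.coe_toNNReal _ hL] at this
    have h1 : L * dist y z ≤ L * δ := mul_le_mul_of_nonneg_left hdz.le hL
    have h2 := (abs_le.mp (by rwa [Real.dist_eq] at hlip : |g y - g z| ≤ L * dist y z)).1
    have hz' : t ≤ f z := hz
    rw [hfy] at hz'
    show t - c ≤ f y
    rw [hfy, hcdef]
    linarith
  -- integral comparison on Ioc 0 M
  have int_T : IntegrableOn T (Ioc 0 M) volume := (T_anti.intervalIntegrable).1
  have int_Fs : IntegrableOn (fun t => F (t - c)) (Ioc 0 M) volume :=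
    ((F_anti.comp_monotone (fun a b hab => by simp [hab] : Monotone fun t : ℝ => t - c)
      : Antitone fun t => F (t - c)).intervalIntegrable).1
  have mono1 : ∫ t in Ioc 0 M, T t ≤ ∫ t in Ioc 0 M, F (t - c) :=
    setIntegral_mono_on int_T int_Fs measurableSet_Ioc (fun t _ => hTF t)
  -- shift computation
  have e1 : ∫ t in Ioc 0 M, F (t - c) = ∫ t in (0:ℝ)..M, F (t - c) :=
    (intervalIntegral.integral_of_le hM0).symm
  have e2 : ∫ t in (0:ℝ)..M, F (t - c) = ∫ t in (0 - c)..(M - c), F t :=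
    intervalIntegral.integral_comp_sub_right F c
  have iiF : ∀ a b : ℝ, IntervalIntegrable F volume a b := fun a b => F_anti.intervalIntegrable
  have e3 : ∫ t in (0 - c)..(M - c), F t
      = (∫ t in (0 - c)..(0:ℝ), F t) + ∫ t in (0:ℝ)..(M - c), F t :=
    (intervalIntegral.integral_add_adjacent_intervals (iiF _ _) (iiF _ _)).symm
  have b1 : ∫ t in (0 - c)..(0:ℝ), F t ≤ c := by
    have := intervalIntegral.integral_mono_on (by linarith : 0 - c ≤ (0:ℝ))
      (iiF _ _) intervalIntegrable_const (fun u _ => F_le_one u)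
    simpa using this
  have b2 : ∫ t in (0:ℝ)..(M - c), F t ≤ ∫ t in (0:ℝ)..M, F t := by
    rcases le_or_gt 0 (M - c) with h | h
    · have split := intervalIntegral.integral_add_adjacent_intervals
        (iiF 0 (M - c)) (iiF (M - c) M)
      have pos : 0 ≤ ∫ t in (M - c)..M, F t :=
        intervalIntegral.integral_nonneg (by linarith) (fun u _ => F_nonneg u)
      linarith
    · have hsym : ∫ t in (0:ℝ)..(M - c), F t = -∫ t in (M - c)..(0:ℝ), F t :=
        intervalIntegral.integral_symm _ _
      have pos1 : 0 ≤ ∫ t in (M - c)..(0:ℝ), F t :=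
        intervalIntegral.integral_nonneg (by linarith) (fun u _ => F_nonneg u)
      have pos2 : 0 ≤ ∫ t in (0:ℝ)..M, F t :=
        intervalIntegral.integral_nonneg hM0 (fun u _ => F_nonneg u)
      linarith
  have e4 : ∫ t in (0:ℝ)..M, F t = ∫ y, f y ∂Q := by
    rw [intervalIntegral.integral_of_le hM0]
    exact (BoundedContinuousFunction.integral_eq_integral_meas_le f Q
      (Filter.Eventually.of_forall f_nn)).symm
  -- integrals of f vs g
  have gint : ∀ (ρ : Measure X) [IsProbabilityMeasure ρ], Integrable g ρ := by
    intro ρ _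
    have : Integrable (fun y => f y) ρ := f.integrable ρ
    have h2 : Integrable (fun y => f y - 1) ρ := this.sub (integrable_const 1)
    refine h2.congr (Filter.Eventually.of_forall fun y => ?_)
    dsimp only
    rw [hfy]; ring
  have ef : ∀ (ρ : Measure X) [IsProbabilityMeasure ρ], ∫ y, f y ∂ρ = (∫ y, g y ∂ρ) + 1 := by
    intro ρ _
    calc ∫ y, f y ∂ρ = ∫ y, (g y + 1) ∂ρ := by simp only [hfy]
    _ = (∫ y, g y ∂ρ) + ∫ y, (1:ℝ) ∂ρ := integral_add (gint ρ) (integrable_const 1)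
    _ = (∫ y, g y ∂ρ) + 1 := by simp [measure_univ]
  have hδM : δ * M ≤ δ * 2 := mul_le_mul_of_nonneg_left hM2 δ_pos.le
  have efP := ef P
  have efQ := ef Q
  rw [efP] at key
  -- key : ∫ g ∂P + 1 ≤ (∫ t in Ioc 0 M, T t) + δ * M
  have chain : (∫ t in Ioc 0 M, T t) ≤ c + ((∫ y, g y ∂Q) + 1) := by
    calc (∫ t in Ioc 0 M, T t) ≤ ∫ t in Ioc 0 M, F (t - c) := mono1
    _ = (∫ t in (0 - c)..(0:ℝ), F t) + ∫ t in (0:ℝ)..(M - c), F t := by rw [e1, e2, e3]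
    _ ≤ c + ∫ t in (0:ℝ)..M, F t := by linarith
    _ = c + ((∫ y, g y ∂Q) + 1) := by rw [e4, efQ]
  have : (∫ y, g y ∂P) + 1 ≤ c + ((∫ y, g y ∂Q) + 1) + δ * M := by
    have key : (∫ y, g y ∂P) + 1 ≤ (∫ t in Ioc 0 M, T t) + δ * M := key
    linarith
  rw [hcdef] at this
  nlinarith

theorem conv [TopologicalSpace.SeparableSpace X] (x : X) (μs : ℕ → Measure X) (μ : Measure X)
    (hμs : ∀ i (y : X) (r : ℝ), μs i (closedBall y r) < ⊤)
    (hμ : ∀ (y : X) (r : ℝ), μ (closedBall y r) < ⊤)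
    (H : ∀ g : X → ℝ, Continuous g → (∃ C, ∀ y, |g y| ≤ C) →
        Bornology.IsBounded (tsupport g) →
        Tendsto (fun i => ∫ y, g y ∂(μs i)) atTop (nhds (∫ y, g y ∂μ))) :
    Tendsto (fun i => Fx x (μs i) μ) atTop (nhds 0) := by
  classical
  rw [Metric.tendsto_atTop]
  intro δ hδ
  set ε := min (δ/2) (1/4) with hεdef
  have hε0 : 0 < ε := lt_min (by linarith) (by norm_num)
  have hε12 : ε < 1/2 := lt_of_le_of_lt (min_le_right _ _) (by norm_num)
  have hεδ : ε < δ := lt_of_le_of_lt (min_le_left _ _) (by linarith)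
  set L := 1/ε with hLdef
  have hL0 : 0 < L := by positivity
  -- the bump function
  set χ : X → ℝ := fun y => max 0 (min 1 (L + 1 - dist y x)) with hχdef
  have hχc : Continuous χ := by
    apply continuous_const.max
    exact continuous_const.min (continuous_const.sub (continuous_id.dist continuous_const))
  have hχ0 : ∀ y, 0 ≤ χ y := fun y => le_max_left _ _
  have hχ1 : ∀ y, χ y ≤ 1 := fun y => max_le (by norm_num) (min_le_left _ _)
  have hχabs : ∀ y, |χ y| ≤ 1 := fun y => abs_le.mpr ⟨by linarith [hχ0 y], hχ1 y⟩
  have hχball : ∀ y ∈ closedBall x L, χ y = 1 := by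
    intro y hy
    have : dist y x ≤ L := mem_closedBall.mp hy
    have h1 : (1:ℝ) ≤ L + 1 - dist y x := by linarith
    simp only [hχdef]
    rw [min_eq_left h1]
    norm_num
  have hχout : ∀ y, y ∉ closedBall x (L+1) → χ y = 0 := by
    intro y hy
    have : ¬ dist y x ≤ L + 1 := fun h => hy (mem_closedBall.mpr h)
    have h1 : L + 1 - dist y x < 0 := by linarith [not_le.mp this]
    simp only [hχdef]
    rw [min_eq_right (by linarith), max_eq_left (by linarith)]
  have hχsupp : tsupport χ ⊆ closedBall x (L+1) := by
    refine closure_minimal ?_ Metric.isClosed_closedBall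
    intro y hy
    by_contra hc
    exact hy (hχout y hc)
  have hχint : ∀ (ρ : Measure X), (∀ (y : X) (s : ℝ), ρ (closedBall y s) < ⊤) →
      Integrable χ ρ := fun ρ h => aux_integrable ρ hχc hχabs hχsupp (h x (L+1))
  -- masses
  set mi : ℕ → ℝ := fun i => ∫ y, χ y ∂(μs i) with hmidef
  set m : ℝ := ∫ y, χ y ∂μ with hmdef
  have Hχ : Tendsto mi atTop (nhds m) :=
    H χ hχc ⟨1, hχabs⟩ (Metric.isBounded_closedBall.subset hχsupp)
  have hmi0 : ∀ i, 0 ≤ mi i := fun i => integral_nonneg hχ0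
  have hm0 : 0 ≤ m := integral_nonneg hχ0
  -- weighted measures
  set D : X → ℝ≥0 := fun y => Real.toNNReal (χ y) with hDdef
  have hD : Measurable D := hχc.measurable.real_toNNReal
  set ν : Measure X → Measure X := fun ρ => ρ.withDensity (fun y => (D y : ℝ≥0∞)) with hνdef
  have hνfin : ∀ (ρ : Measure X), (∀ (y : X) (s : ℝ), ρ (closedBall y s) < ⊤) →
      IsFiniteMeasure (ν ρ) := by
    intro ρ h
    have : (fun y => ((D y : ℝ≥0∞))) = fun y => ENNReal.ofReal (χ y) := rfl
    rw [hνdef]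
    simp only []
    rw [this]
    exact isFiniteMeasure_withDensity_ofReal (hχint ρ h).2
  have hmass : ∀ (ρ : Measure X), (ν ρ) Set.univ = ∫⁻ y, ENNReal.ofReal (χ y) ∂ρ := by
    intro ρ
    rw [hνdef]
    simp only []
    rw [withDensity_apply _ MeasurableSet.univ, Measure.restrict_univ]
    rfl
  have hmasstoReal : ∀ (ρ : Measure X), (∀ (y : X) (s : ℝ), ρ (closedBall y s) < ⊤) →
      ((ν ρ) Set.univ).toReal = ∫ y, χ y ∂ρ := by
    intro ρ h
    rw [hmass ρ, integral_eq_lintegral_of_nonneg_ae (Filter.Eventually.of_forall hχ0)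
      hχc.aestronglyMeasurable]
  -- integral identity for functions in the family
  have hgid : ∀ (ρ : Measure X) (g : X → ℝ), tsupport g ⊆ closedBall x L →
      ∫ y, g y ∂(ν ρ) = ∫ y, g y ∂ρ := by
    intro ρ g hgs
    rw [hνdef]
    simp only []
    rw [integral_withDensity_eq_integral_smul hD g]
    refine integral_congr_ae (Filter.Eventually.of_forall fun y => ?_)
    by_cases hy : y ∈ closedBall x L
    · have : χ y = 1 := hχball y hy
      simp [NNReal.smul_def, hDdef, this]
    · have hgy : g y = 0 := image_eq_zero_of_notMem_tsupport (fun h => hy (hgs h))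
      simp [hgy]
  -- integral of bcf against ν ρ
  have hbcf : ∀ (ρ : Measure X) (f : X →ᵇ ℝ),
      ∫ y, f y ∂(ν ρ) = ∫ y, χ y * f y ∂ρ := by
    intro ρ f
    rw [hνdef]
    simp only []
    rw [integral_withDensity_eq_integral_smul hD]
    refine integral_congr_ae (Filter.Eventually.of_forall fun y => ?_)
    simp [NNReal.smul_def, hDdef, Real.coe_toNNReal _ (hχ0 y)]
  -- it suffices to bound FLr eventually
  suffices hFLr : ∃ N, ∀ i ≥ N, FLr x L L (μs i) μ < ε by
    obtain ⟨N, hN⟩ := hFLr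
    refine ⟨N, fun i hi => ?_⟩
    have hFxle : Fx x (μs i) μ ≤ ε := by
      apply csInf_le
      · refine ⟨0, fun b hb => ?_⟩
        rw [Set.mem_union, Set.mem_singleton_iff] at hb
        rcases hb with hb | hb
        · rw [hb]; norm_num
        · exact hb.1.le
      · refine Or.inr ⟨hε0, hε12, ?_⟩
        rw [← hLdef]
        exact hN i hi
    have hFx0 : 0 ≤ Fx x (μs i) μ := by
      apply le_csInf ⟨1/2, Set.mem_union_left _ (Set.mem_singleton _)⟩
      intro b hb
      rw [Set.mem_union, Set.mem_singleton_iff] at hb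
      rcases hb with hb | hb
      · rw [hb]; norm_num
      · exact hb.1.le
    rw [Real.dist_eq, sub_zero, abs_of_nonneg hFx0]
    linarith
  -- main bound: eventually all elements of the family set are ≤ ε/2
  suffices hmain : ∃ N, ∀ i ≥ N, ∀ g : X → ℝ, (∀ y, g y ∈ Set.Icc (-1:ℝ) 1) →
      LipschitzWith (Real.toNNReal L) g → tsupport g ⊆ closedBall x L →
      (∫ y, g y ∂(μs i)) - ∫ y, g y ∂μ ≤ ε/2 by
    obtain ⟨N, hN⟩ := hmain
    refine ⟨N, fun i hi => ?_⟩
    have : FLr x L L (μs i) μ ≤ ε/2 := by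
      apply Real.sSup_le
      · rintro t ⟨g, hg1, hgl, hgs, rfl⟩
        exact hN i hi g hg1 hgl hgs
      · positivity
    linarith
  -- abs bound for family members against χ
  have hgabs : ∀ (ρ : Measure X), (∀ (y : X) (s : ℝ), ρ (closedBall y s) < ⊤) →
      ∀ g : X → ℝ, (∀ y, g y ∈ Set.Icc (-1:ℝ) 1) → Continuous g →
      tsupport g ⊆ closedBall x L → |∫ y, g y ∂ρ| ≤ ∫ y, χ y ∂ρ := by
    intro ρ h g hg1 hgc hgs
    have h1 : |∫ y, g y ∂ρ| ≤ ∫ y, |g y| ∂ρ := by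
      simpa [Real.norm_eq_abs] using norm_integral_le_integral_norm (μ := ρ) g
    have h2 : ∫ y, |g y| ∂ρ ≤ ∫ y, χ y ∂ρ := by
      refine integral_mono_of_nonneg (Filter.Eventually.of_forall fun y => abs_nonneg _)
        (hχint ρ h) (Filter.Eventually.of_forall fun y => ?_)
      by_cases hy : y ∈ closedBall x L
      · rw [hχball y hy]
        exact abs_le.mpr ⟨(hg1 y).1, (hg1 y).2⟩
      · have hgy : g y = 0 := image_eq_zero_of_notMem_tsupport (fun h => hy (hgs h))
        simp [hgy, hχ0 y]
    linarith
  have hmi_eq : ∀ i, mi i = ∫ y, χ y ∂(μs i) := fun i => rfl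
  have hm_eq : m = ∫ y, χ y ∂μ := rfl
  rcases eq_or_lt_of_le hm0 with hm | hm
  · -- case m = 0
    obtain ⟨N, hN⟩ := Metric.tendsto_atTop.mp Hχ (ε/2) (by positivity)
    refine ⟨N, fun i hi g hg1 hgl hgs => ?_⟩
    have h1 := hgabs (μs i) (hμs i) g hg1 hgl.continuous hgs
    have h2 := hgabs μ hμ g hg1 hgl.continuous hgs
    have h3 := hN i hi
    rw [Real.dist_eq] at h3
    rw [← hmi_eq i] at h1
    rw [← hm_eq] at h2
    have h4 : ∫ y, g y ∂(μs i) ≤ mi i := le_of_abs_le h1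
    have h5 : -m ≤ ∫ y, g y ∂μ := (abs_le.mp h2).1
    have h6 : mi i - m < ε/2 := lt_of_abs_lt h3
    linarith
  · -- case m > 0
    haveI hνμfin : IsFiniteMeasure (ν μ) := hνfin μ hμ
    haveI hνifin : ∀ i, IsFiniteMeasure (ν (μs i)) := fun i => hνfin (μs i) (hμs i)
    have hmassi : ∀ i, ((ν (μs i)) Set.univ).toReal = mi i :=
      fun i => (hmasstoReal (μs i) (hμs i)).trans (hmi_eq i).symm
    have hmassμ : ((ν μ) Set.univ).toReal = m := (hmasstoReal μ hμ).trans hm_eq.symm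
    have hνμne : ν μ ≠ 0 := by
      intro hcon
      rw [hcon] at hmassμ
      simp at hmassμ
      linarith
    haveI : NeZero (ν μ) := ⟨hνμne⟩
    set Pμ : ProbabilityMeasure X := ⟨((ν μ) Set.univ)⁻¹ • (ν μ), inferInstance⟩ with hPμdef
    set Q : ℕ → ProbabilityMeasure X := fun i =>
      if h : ν (μs i) ≠ 0 then
        ⟨((ν (μs i)) Set.univ)⁻¹ • (ν (μs i)), by
          haveI : NeZero (ν (μs i)) := ⟨h⟩
          infer_instance⟩
      else Pμ with hQdef
    -- eventual positivity of masses
    have hev : ∀ᶠ i in atTop, m/2 < mi i :=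
      Hχ.eventually (eventually_gt_nhds (by linarith))
    have hgood : ∀ i, m/2 < mi i → ν (μs i) ≠ 0 := by
      intro i hmi hcon
      have h := hmassi i
      rw [hcon] at h
      simp at h
      linarith
    -- integral formulas
    have hQint : ∀ i, m/2 < mi i → ∀ f : X → ℝ,
        ∫ y, f y ∂((Q i : ProbabilityMeasure X) : Measure X)
          = (mi i)⁻¹ * ∫ y, f y ∂(ν (μs i)) := by
      intro i hmi f
      have hne := hgood i hmi
      have : (Q i : Measure X) = ((ν (μs i)) Set.univ)⁻¹ • (ν (μs i)) := by
        rw [hQdef]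
        simp only [dif_pos hne]
        exact congrArg (fun P : ProbabilityMeasure X => (P : Measure X)) (dif_pos hne)
      rw [this, integral_smul_measure, ENNReal.toReal_inv, hmassi i, smul_eq_mul]
    have hPint : ∀ f : X → ℝ,
        ∫ y, f y ∂(Pμ : Measure X) = m⁻¹ * ∫ y, f y ∂(ν μ) := by
      intro f
      have : (Pμ : Measure X) = ((ν μ) Set.univ)⁻¹ • (ν μ) := rfl
      rw [this, integral_smul_measure, ENNReal.toReal_inv, hmassμ, smul_eq_mul]
    -- convergence of Q to Pμ
    have hQtend : Tendsto Q atTop (nhds Pμ) := by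
      rw [ProbabilityMeasure.tendsto_iff_forall_integral_tendsto]
      intro f
      have hlim : Tendsto (fun i => (mi i)⁻¹ * ∫ y, χ y * f y ∂(μs i)) atTop
          (nhds (m⁻¹ * ∫ y, χ y * f y ∂μ)) := by
        refine Tendsto.mul (Hχ.inv₀ (ne_of_gt hm)) ?_
        refine H _ (hχc.mul f.continuous) ⟨‖f‖, fun y => ?_⟩ ?_
        · rw [abs_mul]
          calc |χ y| * |f y| ≤ 1 * ‖f‖ := by
                refine mul_le_mul (hχabs y) ?_ (abs_nonneg _) (by norm_num)
                exact f.norm_coe_le_norm y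
          _ = ‖f‖ := by ring
        · refine (Metric.isBounded_closedBall (x := x) (r := L+1)).subset ?_
          refine subset_trans (closure_minimal ?_ (isClosed_tsupport χ)) hχsupp
          intro y hy
          rw [Function.mem_support] at hy
          refine subset_closure ?_
          rw [Function.mem_support]
          intro hcon
          exact hy (by rw [hcon]; ring)
      have e : ∫ y, f y ∂(Pμ : Measure X) = m⁻¹ * ∫ y, χ y * f y ∂μ := by
        rw [hPint f, hbcf μ f]
      rw [e]
      refine hlim.congr' ?_
      filter_upwards [hev] with i hi
      rw [hQint i hi f, hbcf (μs i) f]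
    -- LP convergence
    have hfac : (0:ℝ) < 4*(m+1)*(L+2) := by nlinarith
    set δ₀ : ℝ := ε/(4*(m+1)*(L+2)) with hδ₀def
    have hδ₀pos : 0 < δ₀ := div_pos hε0 hfac
    have hLP : Tendsto (fun i => (LevyProkhorov.toMeasureEquiv (α := ProbabilityMeasure X)).symm (Q i)) atTop
        (nhds ((LevyProkhorov.toMeasureEquiv (α := ProbabilityMeasure X)).symm Pμ)) :=
      (LevyProkhorov.continuous_ofMeasure_probabilityMeasure.tendsto _).comp hQtend
    obtain ⟨N1, hN1⟩ := Metric.tendsto_atTop.mp hLP δ₀ hδ₀pos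
    rw [eventually_atTop] at hev
    obtain ⟨N2, hN2⟩ := hev
    obtain ⟨N3, hN3⟩ := Metric.tendsto_atTop.mp Hχ (min (ε/4) 1)
      (lt_min (by positivity) (by norm_num))
    refine ⟨max N1 (max N2 N3), fun i hi g hg1 hgl hgs => ?_⟩
    have hi1 : N1 ≤ i := le_trans (le_max_left _ _) hi
    have hi2 : N2 ≤ i := le_trans (le_trans (le_max_left _ _) (le_max_right _ _)) hi
    have hi3 : N3 ≤ i := le_trans (le_trans (le_max_right _ _) (le_max_right _ _)) hi
    have hmi : m/2 < mi i := hN2 i hi2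
    have hmipos : 0 < mi i := by linarith
    have hνne := hgood i hmi
    -- edist bound
    have hdist := hN1 i hi1
    rw [LevyProkhorov.dist_probabilityMeasure_def] at hdist
    unfold levyProkhorovDist at hdist
    have hedist : levyProkhorovEDist ((Q i : ProbabilityMeasure X) : Measure X)
        ((Pμ : ProbabilityMeasure X) : Measure X) < ENNReal.ofReal δ₀ := by
      rw [ENNReal.lt_ofReal_iff_toReal_lt (levyProkhorovEDist_ne_top _ _)]
      exact hdist
    have habs1 : ∀ y, |g y| ≤ 1 := fun y => abs_le.mpr ⟨(hg1 y).1, (hg1 y).2⟩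
    have hA1 : ∫ y, g y ∂((Q i : ProbabilityMeasure X) : Measure X)
        ≤ (∫ y, g y ∂((Pμ : ProbabilityMeasure X) : Measure X)) + (L+2)*δ₀ :=
      lp_integral_lipschitz _ _ hδ₀pos hL0.le hedist habs1 hgl
    set Ai : ℝ := ∫ y, g y ∂((Q i : ProbabilityMeasure X) : Measure X) with hAidef
    set A : ℝ := ∫ y, g y ∂((Pμ : ProbabilityMeasure X) : Measure X) with hAdef
    have e1 : ∫ y, g y ∂(μs i) = mi i * Ai := by
      rw [hAidef, hQint i hmi g, hgid (μs i) g hgs]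
      field_simp
    have e2 : ∫ y, g y ∂μ = m * A := by
      rw [hAdef, hPint g, hgid μ g hgs]
      field_simp
    have hAbd : |A| ≤ 1 := by
      have := norm_integral_le_of_norm_le_const (μ := (Pμ : Measure X)) (C := 1)
        (Filter.Eventually.of_forall fun y => by rw [Real.norm_eq_abs]; exact habs1 y)
      simpa [measure_univ, Real.norm_eq_abs] using this
    have hmdist := hN3 i hi3
    rw [Real.dist_eq] at hmdist
    have hmub : |mi i - m| ≤ ε/4 := le_trans hmdist.le (min_le_left _ _)
    have hm1 : mi i ≤ m + 1 := by
      have := (abs_le.mp (le_trans hmdist.le (min_le_right _ _))).2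
      linarith
    have hcross : (mi i - m) * A ≤ ε/4 := by
      calc (mi i - m) * A ≤ |(mi i - m) * A| := le_abs_self _
      _ = |mi i - m| * |A| := abs_mul _ _
      _ ≤ (ε/4) * 1 := mul_le_mul hmub hAbd (abs_nonneg _) (by linarith)
      _ = ε/4 := by ring
    have hmain1 : mi i * (Ai - A) ≤ (m+1) * ((L+2)*δ₀) := by
      calc mi i * (Ai - A) ≤ mi i * ((L+2)*δ₀) := by
            refine mul_le_mul_of_nonneg_left (by linarith) hmipos.le
      _ ≤ (m+1) * ((L+2)*δ₀) := by
            refine mul_le_mul_of_nonneg_right hm1 (by positivity)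
    have hkey : (m+1) * ((L+2)*δ₀) = ε/4 := by
      rw [hδ₀def]
      field_simp
    rw [e1, e2]
    nlinarith

end AuxAll

theorem stmt_7 {X : Type*} [MetricSpace X] [MeasurableSpace X] [BorelSpace X]
    [CompleteSpace X] [TopologicalSpace.SeparableSpace X]
    (x : X) (μs : ℕ → Measure X) (μ : Measure X)
    (hμs : ∀ i (y : X) (r : ℝ), μs i (closedBall y r) < ⊤)
    (hμ : ∀ (y : X) (r : ℝ), μ (closedBall y r) < ⊤) :
    Filter.Tendsto (fun i => Fx x (μs i) μ) Filter.atTop (nhds 0) ↔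
      ∀ g : X → ℝ, Continuous g → (∃ C, ∀ y, |g y| ≤ C) →
        Bornology.IsBounded (tsupport g) →
        Filter.Tendsto (fun i => ∫ y, g y ∂(μs i)) Filter.atTop (nhds (∫ y, g y ∂μ)) := by
  constructor
  · intro hT g hgc hCex hbs
    obtain ⟨C, hC⟩ := hCex
    obtain ⟨r0, hr0⟩ := hbs.subset_closedBall x
    set r := max r0 0 with hrdef
    have hr : 0 ≤ r := le_max_right _ _
    have hsub : tsupport g ⊆ closedBall x r :=
      hr0.trans (closedBall_subset_closedBall (le_max_left _ _))
    set C' := max C 1 with hC'def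
    have hC'pos : (0:ℝ) < C' := lt_of_lt_of_le one_pos (le_max_right _ _)
    set h : X → ℝ := fun y => C'⁻¹ * g y with hhdef
    have hh1 : ∀ y, |h y| ≤ 1 := by
      intro y
      rw [hhdef]
      simp only [abs_mul, abs_inv, abs_of_pos hC'pos]
      rw [inv_mul_le_iff₀ hC'pos, mul_one]
      exact le_trans (hC y) (le_max_left _ _)
    have hhc : Continuous h := continuous_const.mul hgc
    have hhs : tsupport h ⊆ closedBall x r := by
      refine subset_trans (closure_minimal ?_ (isClosed_tsupport g)) hsub
      intro y hy
      rw [Function.mem_support] at hy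
      refine subset_closure ?_
      rw [Function.mem_support]
      intro hcon
      exact hy (by rw [hhdef]; simp [hcon])
    have hconv := fwd_one x μs μ hμs hμ hT hhc hh1 hr hhs
    have e : ∀ ρ : Measure X, ∫ y, g y ∂ρ = C' * ∫ y, h y ∂ρ := by
      intro ρ
      rw [← integral_const_mul]
      refine integral_congr_ae (Filter.Eventually.of_forall fun y => ?_)
      rw [hhdef]
      field_simp
    have hfin := hconv.const_mul C'
    rw [show (fun i => ∫ y, g y ∂(μs i)) = fun i => C' * ∫ y, h y ∂(μs i) from
      funext fun i => e (μs i), e μ]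
    exact hfin
  · exact conv x μs μ hμs hμ
end

section
/- Fix n ≥ 1, i ∈ ℕ, l = 2^{-N} for some N ≥ 1, and let 0 ≤ m ≤ n. Let D(i+1) = { l^{i+1}(j₁,…,j_n) ∈ [0,1]^n : j_k ∈ ℤ }, let Q, Q' be axis-parallel dyadic cubes of side length l^i in [0,1]^n with corners in l^i·ℤ^n, and let p ∈ skel(Q,m) ∩ D(i+1), p' ∈ skel(Q',m) ∩ D(i+1), where skel(Q,m) is the union of all m-dimensional faces of side length l^i contained in Q. Suppose F is an m-dimensional face of side length l^i with p ∈ F and p' ∉ F. Then there exists q ∈ ∂F ∩ D(i+1) (the boundary ∂F being the union of (m−1)-dimensional sub-faces of F) such that max{‖p − q‖_∞, ‖q − p'‖_∞} ≤ ‖p − p'‖_∞. -/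
/-- A point of the grid `s·ℤⁿ ∩ [0,1]ⁿ`. -/
def gridPt (n : ℕ) (s : ℝ) (p : Fin n → ℝ) : Prop :=
  (∀ j, ∃ z : ℤ, p j = s * z) ∧ ∀ j, p j ∈ Set.Icc (0:ℝ) 1

/-- `m`-dimensional axis-parallel face of side length `s` in `[0,1]ⁿ` with
corners in `s·ℤⁿ`. -/
def isFace (n : ℕ) (s : ℝ) (m : ℕ) (F : Set (Fin n → ℝ)) : Prop :=
  ∃ (c : Fin n → ℝ) (b : Fin n → Bool),
    (∀ j, ∃ z : ℤ, c j = s * z) ∧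
    (∀ j, 0 ≤ c j ∧ c j + (if b j then s else 0) ≤ 1) ∧
    (Finset.univ.filter fun j => b j = true).card = m ∧
    F = {x | ∀ j, c j ≤ x j ∧ x j ≤ c j + (if b j then s else 0)}

/-- The `m`-skeleton of `Q`: the union of the `m`-dimensional faces of side
length `s` contained in `Q`. -/
def skel (n : ℕ) (s : ℝ) (m : ℕ) (Q : Set (Fin n → ℝ)) : Set (Fin n → ℝ) :=
  ⋃₀ {F | isFace n s m F ∧ F ⊆ Q}

/-- The boundary of an `m`-dimensional face: the union of the `(m-1)`-dimensional
faces contained in it. -/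
def faceBoundary (n : ℕ) (s : ℝ) (m : ℕ) (F : Set (Fin n → ℝ)) : Set (Fin n → ℝ) :=
  ⋃₀ {F' | isFace n s (m-1) F' ∧ F' ⊆ F}

theorem stmt_15 (n N i : ℕ) (hn : 1 ≤ n) (hN : 1 ≤ N)
    (l : ℝ) (hl : l = (2:ℝ)^(-(N:ℤ)))
    (m : ℕ) (hm : m ≤ n)
    (Q Q' : Set (Fin n → ℝ)) (hQ : isFace n (l^i) n Q) (hQ' : isFace n (l^i) n Q')
    (F : Set (Fin n → ℝ)) (hF : isFace n (l^i) m F)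
    (p p' : Fin n → ℝ)
    (hp : p ∈ skel n (l^i) m Q) (hpD : gridPt n (l^(i+1)) p)
    (hp' : p' ∈ skel n (l^i) m Q') (hp'D : gridPt n (l^(i+1)) p')
    (hpF : p ∈ F) (hp'F : p' ∉ F) :
    ∃ q ∈ faceBoundary n (l^i) m F, gridPt n (l^(i+1)) q ∧
      dist p q ≤ dist p p' ∧ dist q p' ≤ dist p p' := by
  have hl0 : (0:ℝ) < l := by rw [hl]; positivity
  set s : ℝ := l ^ i with hsdef
  have hs0 : (0:ℝ) < s := pow_pos hl0 i
  have hls : l ^ (i + 1) * (2:ℝ) ^ N = s := by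
    rw [hsdef, pow_succ, mul_assoc, hl]
    rw [← zpow_natCast (2:ℝ) N, ← zpow_add₀ (two_ne_zero)]
    simp
  have hFcopy := hF
  obtain ⟨c, b, hcz, hcb, hcard, hFeq⟩ := hF
  have hpF' : ∀ j, c j ≤ p j ∧ p j ≤ c j + (if b j then s else 0) := by
    rw [hFeq] at hpF; exact hpF
  -- m = 0 case
  rcases Nat.eq_zero_or_pos m with rfl | hm1
  · refine ⟨p, Set.mem_sUnion.mpr ⟨F, ⟨hFcopy, Set.Subset.rfl⟩, hpF⟩, hpD, ?_, le_rfl⟩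
    simp [dist_nonneg]
  -- main construction helper
  have finish : ∀ (k : Fin n) (v : ℝ), b k = true → (v = c k ∨ v = c k + s) →
      |p k - v| ≤ dist p p' → |v - p' k| ≤ dist p p' →
      ∃ q ∈ faceBoundary n s m F, gridPt n (l ^ (i + 1)) q ∧
        dist p q ≤ dist p p' ∧ dist q p' ≤ dist p p' := by
    intro k v hk hv h1 h2
    have hckz := hcz k
    have hvz : ∃ z : ℤ, v = s * z := by
      obtain ⟨z, hz⟩ := hckz
      rcases hv with rfl | rfl
      · exact ⟨z, hz⟩
      · exact ⟨z + 1, by rw [hz]; push_cast; ring⟩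
    have hck := hcb k
    rw [if_pos hk] at hck
    have hv0 : 0 ≤ v := by rcases hv with rfl | rfl <;> linarith [hck.1, hck.2, hs0]
    have hv1 : v ≤ 1 := by rcases hv with rfl | rfl <;> linarith [hck.1, hck.2, hs0]
    refine ⟨Function.update p k v, ?_, ?_, ?_, ?_⟩
    · -- boundary membership
      refine Set.mem_sUnion.mpr ⟨{x | ∀ j, Function.update c k v j ≤ x j ∧
          x j ≤ Function.update c k v j + (if Function.update b k false j then s else 0)},
          ⟨⟨Function.update c k v, Function.update b k false, ?_, ?_, ?_, rfl⟩, ?_⟩, ?_⟩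
      · intro j
        rcases eq_or_ne j k with rfl | hne
        · rw [Function.update_self]; exact hvz
        · rw [Function.update_of_ne hne]; exact hcz j
      · intro j
        rcases eq_or_ne j k with rfl | hne
        · rw [Function.update_self, Function.update_self, if_neg (by simp)]
          exact ⟨hv0, by linarith⟩
        · rw [Function.update_of_ne hne, Function.update_of_ne hne]; exact hcb j
      · have hset : (Finset.univ.filter fun j => Function.update b k false j = true)
            = (Finset.univ.filter fun j => b j = true).erase k := by
          ext j
          simp only [Finset.mem_filter, Finset.mem_erase, Finset.mem_univ, true_and]
          rcases eq_or_ne j k with rfl | hne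
          · simp
          · simp [Function.update_of_ne hne, hne]
        rw [hset, Finset.card_erase_of_mem (by simp [hk]), hcard]
      · -- subset of F
        rw [hFeq]
        intro x hx j
        rcases eq_or_ne j k with rfl | hne
        · have := hx j
          rw [Function.update_self, if_neg (by simp)] at this
          rw [if_pos hk]
          rcases hv with rfl | rfl
          · exact ⟨this.1, by linarith [this.2, hs0]⟩
          · exact ⟨by linarith [this.1, hs0], by linarith [this.2]⟩
        · have := hx j
          rw [Function.update_of_ne hne, Function.update_of_ne hne] at this
          exact this
      · -- membership of q
        intro j
        rcases eq_or_ne j k with rfl | hne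
        · rw [Function.update_self, Function.update_self, Function.update_self,
            if_neg (by simp)]
          exact ⟨le_rfl, by linarith⟩
        · rw [Function.update_of_ne hne, Function.update_of_ne hne,
            Function.update_of_ne hne]
          exact hpF' j
    · -- grid point
      obtain ⟨hpz, hpI⟩ := hpD
      constructor
      · intro j
        rcases eq_or_ne j k with rfl | hne
        · obtain ⟨z, hz⟩ := hvz
          refine ⟨z * 2 ^ N, ?_⟩
          rw [Function.update_self, hz]
          push_cast
          rw [← hls]
          ring
        · rw [Function.update_of_ne hne]; exact hpz j
      · intro j
        rcases eq_or_ne j k with rfl | hne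
        · rw [Function.update_self]; exact ⟨hv0, hv1⟩
        · rw [Function.update_of_ne hne]; exact hpI j
    · rw [dist_pi_le_iff dist_nonneg]
      intro j
      rcases eq_or_ne j k with rfl | hne
      · rw [Function.update_self, Real.dist_eq]; exact h1
      · rw [Function.update_of_ne hne, dist_self]; exact dist_nonneg
    · rw [dist_pi_le_iff dist_nonneg]
      intro j
      rcases eq_or_ne j k with rfl | hne
      · rw [Function.update_self, Real.dist_eq]; exact h2
      · rw [Function.update_of_ne hne]; exact dist_le_pi_dist p p' j
  by_cases hA : ∃ j, b j = true ∧ (p' j < c j ∨ c j + s < p' j)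
  · obtain ⟨k, hk, hcase⟩ := hA
    have hbk := hpF' k
    rw [if_pos hk] at hbk
    have hdk : |p k - p' k| ≤ dist p p' := by
      rw [← Real.dist_eq]; exact dist_le_pi_dist p p' k
    rw [abs_le] at hdk
    rcases hcase with h | h
    · refine finish k (c k) hk (Or.inl rfl) ?_ ?_ <;>
        · rw [abs_le]; constructor <;> linarith [hbk.1, hbk.2, hdk.1, hdk.2]
    · refine finish k (c k + s) hk (Or.inr rfl) ?_ ?_ <;>
        · rw [abs_le]; constructor <;> linarith [hbk.1, hbk.2, hdk.1, hdk.2]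
  · push_neg at hA
    -- violating fixed coordinate
    have hviol : ∃ j₀, b j₀ = false ∧ p' j₀ ≠ c j₀ := by
      by_contra h
      push_neg at h
      apply hp'F
      rw [hFeq]
      intro j
      by_cases hb : b j = true
      · rw [if_pos hb]; exact hA j hb
      · have hbf : b j = false := by simpa using hb
        rw [if_neg (by simp [hbf]), h j hbf, add_zero]
        exact ⟨le_rfl, le_rfl⟩
    obtain ⟨j₀, hbj₀, hneq⟩ := hviol
    have hpj₀ : p j₀ = c j₀ := by
      have := hpF' j₀
      rw [if_neg (by simp [hbj₀]), add_zero] at this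
      linarith [this.1, this.2]
    by_cases hB1 : ∃ z : ℤ, p' j₀ = s * z
    · -- both multiples of s, distinct, so dist ≥ s
      obtain ⟨z, hz⟩ := hB1
      obtain ⟨zc, hzc⟩ := hcz j₀
      have hd : s ≤ dist p p' := by
        have h2 : |p j₀ - p' j₀| ≤ dist p p' := by
          rw [← Real.dist_eq]; exact dist_le_pi_dist p p' j₀
        rw [hpj₀, hzc, hz] at h2
        have hzz : zc ≠ z := by
          rintro rfl; exact hneq (by rw [hz, hzc])
        have hone : (1:ℝ) ≤ |(zc:ℝ) - z| := by
          have hcast : (zc:ℝ) - z = ((zc - z : ℤ) : ℝ) := by push_cast; ring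
          rw [hcast, ← Int.cast_abs]
          exact_mod_cast Int.one_le_abs (sub_ne_zero.mpr hzz)
        calc s = s * 1 := (mul_one s).symm
          _ ≤ s * |(zc:ℝ) - z| := by
              exact mul_le_mul_of_nonneg_left hone hs0.le
          _ = |s * zc - s * z| := by rw [← mul_sub, abs_mul, abs_of_pos hs0]
          _ ≤ dist p p' := h2
      obtain ⟨k, hk⟩ : ∃ k, b k = true := by
        have hne : (Finset.univ.filter fun j => b j = true).Nonempty := by
          rw [← Finset.card_pos, hcard]; exact hm1
        obtain ⟨k, hk⟩ := hne
        exact ⟨k, (Finset.mem_filter.mp hk).2⟩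
      have hbk := hpF' k
      rw [if_pos hk] at hbk
      have hrange := hA k hk
      refine finish k (c k) hk (Or.inl rfl) ?_ ?_ <;>
        · rw [abs_le]; constructor <;> linarith [hbk.1, hbk.2, hrange.1, hrange.2]
    · -- p' j₀ not a multiple of s: use the face containing p'
      obtain ⟨F'', ⟨⟨c', b', hcz', hcb', hcard', hF''eq⟩, -⟩, hp'mem⟩ := hp'
      rw [hF''eq] at hp'mem
      have hb'j₀ : b' j₀ = true := by
        by_contra h
        have hbf : b' j₀ = false := by simpa using h
        have hh := hp'mem j₀
        rw [if_neg (by simp [hbf]), add_zero] at hh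
        have hpe : p' j₀ = c' j₀ := le_antisymm hh.2 hh.1
        obtain ⟨z, hz⟩ := hcz' j₀
        exact hB1 ⟨z, hpe.trans hz⟩
      have hnsub : ¬ (Finset.univ.filter fun j => b j = true)
          ⊆ (Finset.univ.filter fun j => b' j = true) := by
        intro hsub
        have heq := Finset.eq_of_subset_of_card_le hsub (by rw [hcard, hcard'])
        have hmem : j₀ ∈ Finset.univ.filter fun j => b j = true := by
          rw [heq]; simp [hb'j₀]
        simp [hbj₀] at hmem
      obtain ⟨k, hkmem, hknot⟩ := Finset.not_subset.mp hnsub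
      have hk : b k = true := (Finset.mem_filter.mp hkmem).2
      have hb'k : ¬ b' k = true := fun h =>
        hknot (Finset.mem_filter.mpr ⟨Finset.mem_univ _, h⟩)
      have hp'k : p' k = c' k := by
        have hh := hp'mem k
        rw [if_neg (by simpa using hb'k), add_zero] at hh
        linarith [hh.1, hh.2]
      obtain ⟨z', hz'⟩ := hcz' k
      obtain ⟨zc, hzc⟩ := hcz k
      have hrange := hA k hk
      have hv : p' k = c k ∨ p' k = c k + s := by
        have h1 : c k ≤ p' k := hrange.1
        have h2 : p' k ≤ c k + s := hrange.2
        rw [hp'k, hz', hzc] at h1 h2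
        have hzz1 : zc ≤ z' := by
          have := (mul_le_mul_iff_right₀ hs0).mp h1
          exact_mod_cast this
        have hzz2 : z' ≤ zc + 1 := by
          have hle : s * (z':ℝ) ≤ s * ((zc:ℝ) + 1) := by
            rw [mul_add, mul_one]; linarith
          have := (mul_le_mul_iff_right₀ hs0).mp hle
          exact_mod_cast this
        have : z' = zc ∨ z' = zc + 1 := by omega
        rcases this with rfl | rfl
        · left; rw [hp'k, hz', hzc]
        · right; rw [hp'k, hz', hzc]; push_cast; ring
      refine finish k (p' k) hk hv ?_ ?_
      · rw [← Real.dist_eq]; exact dist_le_pi_dist p p' k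
      · simpa using dist_nonneg (x := p) (y := p')
end

section
/- Let (Z,ζ) be a metric space, X, Y ⊆ Z, x ∈ X, y ∈ Y with x ≠ y. Define a metric ζ̃ on the disjoint union X ⊔ Y equal to ζ on each of X and Y, and ζ̃(w,w') = ζ(w,w') + ζ(x,y) whenever w ∈ X, w' ∈ Y. Then ζ̃ is a metric satisfying ζ̃(w,x) ≤ ζ̃(w,y) for all w ∈ X and ζ̃(w,y) ≤ ζ̃(w,x) for all w ∈ Y, and the quotient metric space of (X ⊔ Y, ζ̃) obtained by identifying x with y admits isometric embeddings of X and Y sending x and y to the same point, with quotient metric ζ' satisfying ζ' ≤ ζ + ζ(x,y) on X ∪ Y. -/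
open Metric

/-- The metric `ζ̃` on the disjoint union `X ⊔ Y`: it equals the metric of `Z`
on each of `X` and `Y`, and `ζ̃(w,w') = ζ(w,w') + ζ(x,y)` across the pieces. -/
noncomputable def glueDist {Z : Type*} [MetricSpace Z] (X Y : Set Z) (x y : Z) :
    (↥X ⊕ ↥Y) → (↥X ⊕ ↥Y) → ℝ
  | .inl a, .inl b => dist (a : Z) (b : Z)
  | .inr a, .inr b => dist (a : Z) (b : Z)
  | .inl a, .inr b => dist (a : Z) (b : Z) + dist x y
  | .inr a, .inl b => dist (a : Z) (b : Z) + dist x y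

/-- The quotient (pseudo)metric obtained from `glueDist` by identifying
`x ∈ X` with `y ∈ Y`. -/
noncomputable def quotDist {Z : Type*} [MetricSpace Z] (X Y : Set Z) (x y : Z)
    (hx : x ∈ X) (hy : y ∈ Y) (p q : ↥X ⊕ ↥Y) : ℝ :=
  min (glueDist X Y x y p q)
    (min (glueDist X Y x y p (.inl ⟨x, hx⟩) + glueDist X Y x y (.inr ⟨y, hy⟩) q)
      (glueDist X Y x y q (.inl ⟨x, hx⟩) + glueDist X Y x y (.inr ⟨y, hy⟩) p))

section Aux

variable {Z : Type*} [MetricSpace Z] (X Y : Set Z) (x y : Z)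

lemma gd_nonneg : ∀ p q, 0 ≤ glueDist X Y x y p q := by
  rintro (a | a) (b | b) <;> simp [_root_.glueDist] <;>
    linarith [dist_nonneg (x := (x : Z)) (y := y),
      dist_nonneg (x := (a : Z)) (y := (b : Z))]

lemma gd_refl : ∀ p, glueDist X Y x y p p = 0 := by
  rintro (a | a) <;> simp [_root_.glueDist]

lemma gd_symm : ∀ p q, glueDist X Y x y p q = glueDist X Y x y q p := by
  rintro (a | a) (b | b) <;> simp [_root_.glueDist, dist_comm]

lemma gd_triangle : ∀ p q s, glueDist X Y x y p s ≤
    glueDist X Y x y p q + glueDist X Y x y q s := by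
  rintro (a | a) (b | b) (c | c) <;> simp [_root_.glueDist] <;>
    linarith [dist_triangle (a : Z) (b : Z) (c : Z),
      dist_nonneg (x := (x : Z)) (y := y)]

variable (hx : x ∈ X) (hy : y ∈ Y)

/-- The distance from `p` to the glue point in the glued space. -/
noncomputable def mDist (p : ↥X ⊕ ↥Y) : ℝ :=
  min (glueDist X Y x y p (.inl ⟨x, hx⟩)) (glueDist X Y x y (.inr ⟨y, hy⟩) p)

lemma mDist_nonneg (p : ↥X ⊕ ↥Y) : 0 ≤ mDist X Y x y hx hy p :=
  le_min (gd_nonneg _ _ _ _ _ _) (gd_nonneg _ _ _ _ _ _)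

lemma mDist_le (p q : ↥X ⊕ ↥Y) :
    mDist X Y x y hx hy p ≤ glueDist X Y x y p q + mDist X Y x y hx hy q := by
  simp only [mDist]
  rcases le_total (glueDist X Y x y q (.inl ⟨x, hx⟩))
      (glueDist X Y x y (.inr ⟨y, hy⟩) q) with h | h
  · rw [min_eq_left h]
    calc min (glueDist X Y x y p (.inl ⟨x, hx⟩)) (glueDist X Y x y (.inr ⟨y, hy⟩) p)
        ≤ glueDist X Y x y p (.inl ⟨x, hx⟩) := min_le_left _ _
      _ ≤ _ := gd_triangle X Y x y p q _
  · rw [min_eq_right h]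
    calc min (glueDist X Y x y p (.inl ⟨x, hx⟩)) (glueDist X Y x y (.inr ⟨y, hy⟩) p)
        ≤ glueDist X Y x y (.inr ⟨y, hy⟩) p := min_le_right _ _
      _ ≤ glueDist X Y x y (.inr ⟨y, hy⟩) q + glueDist X Y x y q p := gd_triangle X Y x y _ q p
      _ = _ := by rw [gd_symm X Y x y q p]; ring

lemma quotDist_eq (p q : ↥X ⊕ ↥Y) :
    quotDist X Y x y hx hy p q =
      min (glueDist X Y x y p q) (mDist X Y x y hx hy p + mDist X Y x y hx hy q) := by
  simp only [mDist]
  apply le_antisymm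
  · apply le_min (min_le_left _ _)
    rcases le_total (glueDist X Y x y p (.inl ⟨x, hx⟩))
        (glueDist X Y x y (.inr ⟨y, hy⟩) p) with hp | hp <;>
      rcases le_total (glueDist X Y x y q (.inl ⟨x, hx⟩))
        (glueDist X Y x y (.inr ⟨y, hy⟩) q) with hq | hq
    · rw [min_eq_left hp, min_eq_left hq]
      refine le_trans (min_le_left _ _) ?_
      calc glueDist X Y x y p q ≤ glueDist X Y x y p (.inl ⟨x, hx⟩)
            + glueDist X Y x y (.inl ⟨x, hx⟩) q := gd_triangle X Y x y p _ q
        _ = _ := by rw [gd_symm X Y x y (Sum.inl ⟨x, hx⟩) q]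
    · rw [min_eq_left hp, min_eq_right hq]
      exact le_trans (min_le_right _ _) (min_le_left _ _)
    · rw [min_eq_right hp, min_eq_left hq]
      refine le_trans (min_le_right _ _) (le_trans (min_le_right _ _) (le_of_eq ?_))
      ring
    · rw [min_eq_right hp, min_eq_right hq]
      refine le_trans (min_le_left _ _) ?_
      calc glueDist X Y x y p q ≤ glueDist X Y x y p (.inr ⟨y, hy⟩)
            + glueDist X Y x y (.inr ⟨y, hy⟩) q := gd_triangle X Y x y p _ q
        _ = _ := by rw [gd_symm X Y x y p (Sum.inr ⟨y, hy⟩)]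
  · refine le_min (min_le_left _ _) (le_min ?_ ?_)
    · exact le_trans (min_le_right _ _)
        (add_le_add (min_le_left _ _) (min_le_right _ _))
    · refine le_trans (min_le_right _ _) ?_
      have h1 := min_le_right (glueDist X Y x y p (.inl ⟨x, hx⟩))
        (glueDist X Y x y (.inr ⟨y, hy⟩) p)
      have h2 := min_le_left (glueDist X Y x y q (.inl ⟨x, hx⟩))
        (glueDist X Y x y (.inr ⟨y, hy⟩) q)
      linarith

end Aux

theorem stmt_16 {Z : Type*} [MetricSpace Z] (X Y : Set Z) (x y : Z)
    (hx : x ∈ X) (hy : y ∈ Y) (hxy : x ≠ y) :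
    (∀ p, glueDist X Y x y p p = 0) ∧
    (∀ p q, glueDist X Y x y p q = glueDist X Y x y q p) ∧
    (∀ p q s, glueDist X Y x y p s ≤ glueDist X Y x y p q + glueDist X Y x y q s) ∧
    (∀ p q, glueDist X Y x y p q = 0 → p = q) ∧
    (∀ a : ↥X, glueDist X Y x y (.inl a) (.inl ⟨x, hx⟩)
        ≤ glueDist X Y x y (.inl a) (.inr ⟨y, hy⟩)) ∧
    (∀ b : ↥Y, glueDist X Y x y (.inr b) (.inr ⟨y, hy⟩)
        ≤ glueDist X Y x y (.inr b) (.inl ⟨x, hx⟩)) ∧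
    (∀ a b : ↥X, quotDist X Y x y hx hy (.inl a) (.inl b) = dist (a : Z) (b : Z)) ∧
    (∀ a b : ↥Y, quotDist X Y x y hx hy (.inr a) (.inr b) = dist (a : Z) (b : Z)) ∧
    quotDist X Y x y hx hy (.inl ⟨x, hx⟩) (.inr ⟨y, hy⟩) = 0 ∧
    (∀ p q, quotDist X Y x y hx hy p q = quotDist X Y x y hx hy q p) ∧
    (∀ p q s, quotDist X Y x y hx hy p s
        ≤ quotDist X Y x y hx hy p q + quotDist X Y x y hx hy q s) ∧
    (∀ (a : ↥X) (b : ↥Y), quotDist X Y x y hx hy (.inl a) (.inr b)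
        ≤ dist (a : Z) (b : Z) + dist x y) := by
  have hD : (0 : ℝ) < dist x y := dist_pos.2 hxy
  refine ⟨gd_refl X Y x y, gd_symm X Y x y, gd_triangle X Y x y, ?_, ?_, ?_, ?_, ?_, ?_, ?_, ?_, ?_⟩
  · -- separation
    rintro (a | a) (b | b) <;> simp only [_root_.glueDist] <;> intro h
    · exact congrArg Sum.inl (Subtype.ext (dist_eq_zero.1 h))
    · exact absurd h (ne_of_gt (by linarith [dist_nonneg (x := (a : Z)) (y := (b : Z))]))
    · exact absurd h (ne_of_gt (by linarith [dist_nonneg (x := (a : Z)) (y := (b : Z))]))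
    · exact congrArg Sum.inr (Subtype.ext (dist_eq_zero.1 h))
  · -- x is closest glue point for X
    intro a
    simp only [_root_.glueDist]
    have := dist_triangle (a : Z) y x
    rw [dist_comm y x] at this
    linarith
  · -- y is closest glue point for Y
    intro b
    simp only [_root_.glueDist]
    have := dist_triangle (b : Z) x y
    linarith
  · -- quotDist restricted to X is dist
    intro a b
    simp only [quotDist, _root_.glueDist]
    have h1 : dist (a : Z) b ≤ dist (a : Z) x + (dist y (b : Z) + dist x y) := by
      have := dist_triangle4 (a : Z) x y (b : Z)
      linarith
    have h2 : dist (a : Z) b ≤ dist (b : Z) x + (dist y (a : Z) + dist x y) := by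
      have := dist_triangle4 (b : Z) x y (a : Z)
      rw [dist_comm (b : Z) (a : Z)] at this
      linarith
    rw [min_eq_left (le_min h1 h2)]
  · -- quotDist restricted to Y is dist
    intro a b
    simp only [quotDist, _root_.glueDist]
    have h1 : dist (a : Z) b ≤ dist (a : Z) x + dist x y + dist y (b : Z) :=
      dist_triangle4 (a : Z) x y (b : Z)
    have h2 : dist (a : Z) b ≤ dist (b : Z) x + dist x y + dist y (a : Z) := by
      have := dist_triangle4 (b : Z) x y (a : Z)
      rw [dist_comm (b : Z) (a : Z)] at this
      linarith
    rw [min_eq_left (le_min (by linarith) (by linarith))]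
  · -- the glue points are identified
    simp only [quotDist]
    apply le_antisymm
    · refine le_trans (min_le_right _ _) (le_trans (min_le_left _ _) ?_)
      rw [gd_refl X Y x y, gd_refl X Y x y, add_zero]
    · exact le_min (gd_nonneg _ _ _ _ _ _)
        (le_min (add_nonneg (gd_nonneg _ _ _ _ _ _) (gd_nonneg _ _ _ _ _ _))
          (add_nonneg (gd_nonneg _ _ _ _ _ _) (gd_nonneg _ _ _ _ _ _)))
  · -- symmetry of quotDist
    intro p q
    rw [quotDist_eq, quotDist_eq, gd_symm X Y x y p q, add_comm]
  · -- triangle inequality for quotDist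
    intro p q s
    rw [quotDist_eq, quotDist_eq, quotDist_eq]
    rcases le_total (glueDist X Y x y p q)
        (mDist X Y x y hx hy p + mDist X Y x y hx hy q) with h1 | h1 <;>
      rcases le_total (glueDist X Y x y q s)
        (mDist X Y x y hx hy q + mDist X Y x y hx hy s) with h2 | h2
    · rw [min_eq_left h1, min_eq_left h2]
      exact le_trans (min_le_left _ _) (gd_triangle X Y x y p q s)
    · rw [min_eq_left h1, min_eq_right h2]
      have := mDist_le X Y x y hx hy p q
      refine le_trans (min_le_right _ _) (by linarith)
    · rw [min_eq_right h1, min_eq_left h2]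
      have h3 := mDist_le X Y x y hx hy s q
      rw [gd_symm X Y x y s q] at h3
      refine le_trans (min_le_right _ _) (by linarith)
    · rw [min_eq_right h1, min_eq_right h2]
      have := mDist_nonneg X Y x y hx hy q
      refine le_trans (min_le_right _ _) (by linarith)
  · -- comparison with dist + dist x y across pieces
    intro a b
    simpa only [quotDist, _root_.glueDist] using
      min_le_left (glueDist X Y x y (.inl a) (.inr b))
        (min (glueDist X Y x y (.inl a) (.inl ⟨x, hx⟩)
            + glueDist X Y x y (.inr ⟨y, hy⟩) (.inr b))
          (glueDist X Y x y (.inr b) (.inl ⟨x, hx⟩)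
            + glueDist X Y x y (.inr ⟨y, hy⟩) (.inl a)))
end
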